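/- arXiv:cs/0604055 — 12 statements merged into one kernel-verified Lean document; each statement's English description precedes it below -/
import Mathlib

section
/- Let d ≥ 1, let a_1, …, a_n ∈ ℝ^d, let z ∈ ℝ^d, and let F = {x ∈ ℝ^d : ⟨a_i, x⟩ ≤ 1 for all i = 1,…,n}. Then there exists a nonzero vector u ∈ ℝ^d such that for every a ∈ ℝ^d with ⟨u, a⟩ ≤ 0 and every c ∈ ℝ: (⟨z,x⟩ ≤ c for all x ∈ F) if and only if (⟨z,x⟩ ≤ c for all x ∈ F with ⟨a,x⟩ ≤ 1). In other words, the numb set of the unit linear program 'maximize ⟨z,x⟩ over F' contains a closed half-space {a : ⟨u,a⟩ ≤ 0}. -/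
open RealInnerProductSpace

section Aux

variable {E : Type} [NormedAddCommGroup E] [InnerProductSpace ℝ E]

lemma inner_proj_eq (K : Submodule ℝ E) [K.HasOrthogonalProjection] (w : E) (y : K) :
    ⟪((K.orthogonalProjectionOnto w : K) : E), (y : E)⟫ = ⟪w, (y : E)⟫ := by
  have h := K.starProjection_inner_eq_zero w (y : E) y.2
  rw [Submodule.starProjection_apply, inner_sub_left] at h
  linarith

lemma inner_span_orth (a : E) (y : (ℝ ∙ a)ᗮ) : ⟪a, (y : E)⟫ = 0 :=
  Submodule.mem_orthogonal_singleton_iff_inner_right.mp y.2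

lemma inner_basept (a : E) (ha : a ≠ 0) (β : ℝ) :
    ⟪a, ((β / (‖a‖ ^ 2)) • a : E)⟫ = β := by
  rw [real_inner_smul_right, real_inner_self_eq_norm_sq, div_mul_cancel₀]
  exact pow_ne_zero 2 (norm_ne_zero_iff.mpr ha)

lemma decomp_of_inner_eq (a : E) (ha : a ≠ 0) (β : ℝ) (x : E) (hx : ⟪a, x⟫ = β) :
    ∃ y : (ℝ ∙ a)ᗮ, x = (β / (‖a‖ ^ 2)) • a + (y : E) := by
  refine ⟨⟨x - (β / (‖a‖ ^ 2)) • a, ?_⟩, by simp⟩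
  rw [Submodule.mem_orthogonal_singleton_iff_inner_right, inner_sub_right, hx,
    inner_basept a ha β, sub_self]

lemma finrank_orth_succ [FiniteDimensional ℝ E] (a : E) (ha : a ≠ 0) :
    Module.finrank ℝ ((ℝ ∙ a)ᗮ : Submodule ℝ E) + 1 = Module.finrank ℝ E := by
  have h := Submodule.finrank_add_finrank_orthogonal (K := (ℝ ∙ a))
  rw [finrank_span_singleton ha] at h
  omega

/-- If the objective is nonpositive on the recession cone, the LP is bounded above. -/
lemma lp_bounded : ∀ (N : ℕ) (E : Type) [NormedAddCommGroup E] [InnerProductSpace ℝ E]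
    [FiniteDimensional ℝ E] (n : ℕ), Module.finrank ℝ E + n ≤ N →
    ∀ (a : Fin n → E) (b : Fin n → ℝ) (z : E),
    (∀ v : E, (∀ i, ⟪a i, v⟫ ≤ 0) → ⟪z, v⟫ ≤ 0) →
    ∃ c : ℝ, ∀ x : E, (∀ i, ⟪a i, x⟫ ≤ b i) → ⟪z, x⟫ ≤ c := by
  intro N
  induction N with
  | zero =>
    intro E _ _ _ n hN a b z hrec
    have hn : n = 0 := by omega
    subst hn
    have hz : z = 0 := by
      have := hrec z (fun i => i.elim0)
      have h2 : (0:ℝ) ≤ ⟪z, z⟫ := real_inner_self_nonneg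
      exact inner_self_eq_zero.mp (le_antisymm this h2)
    exact ⟨0, fun x _ => by simp [hz]⟩
  | succ N ih =>
    intro E _ _ _ n hN a b z hrec
    cases n with
    | zero =>
      have hz : z = 0 := by
        have := hrec z (fun i => i.elim0)
        have h2 : (0:ℝ) ≤ ⟪z, z⟫ := real_inner_self_nonneg
        exact inner_self_eq_zero.mp (le_antisymm this h2)
      exact ⟨0, fun x _ => by simp [hz]⟩
    | succ n =>
      set A : Fin n → E := fun i => a i.castSucc with hA
      set B : Fin n → ℝ := fun i => b i.castSucc with hB
      set aL : E := a (Fin.last n) with haL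
      set bL : ℝ := b (Fin.last n) with hbL
      by_cases hrecn : ∀ v : E, (∀ i, ⟪A i, v⟫ ≤ 0) → ⟪z, v⟫ ≤ 0
      · obtain ⟨c, hc⟩ := ih E n (by omega) A B z hrecn
        exact ⟨c, fun x hx => hc x (fun i => hx i.castSucc)⟩
      · push_neg at hrecn
        obtain ⟨w, hwA, hwz⟩ := hrecn
        -- the last constraint must cut off w
        have hwL : 0 < ⟪aL, w⟫ := by
          by_contra h
          push_neg at h
          have := hrec w (fun i => Fin.lastCases h hwA i)
          linarith
        have ha : aL ≠ 0 := by
          intro h0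
          rw [h0, inner_zero_left] at hwL
          linarith
        set K : Submodule ℝ E := (ℝ ∙ aL)ᗮ with hK
        set x₀ : E := (bL / (‖aL‖ ^ 2)) • aL with hx₀
        have hax₀ : ⟪aL, x₀⟫ = bL := inner_basept aL ha bL
        -- recession hypothesis in K
        have hrecK : ∀ v : K, (∀ i, ⟪(K.orthogonalProjectionOnto (A i) : K), v⟫ ≤ 0) →
            ⟪(K.orthogonalProjectionOnto z : K), v⟫ ≤ 0 := by
          intro v hv
          have h1 : ∀ i : Fin n, ⟪A i, (v : E)⟫ ≤ 0 := by
            intro i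
            have := hv i
            rwa [Submodule.coe_inner, inner_proj_eq] at this
          have h2 : ⟪z, (v : E)⟫ ≤ 0 := by
            refine hrec (v : E) (fun i => Fin.lastCases ?_ h1 i)
            rw [← haL]
            exact le_of_eq (inner_span_orth aL v)
          rwa [Submodule.coe_inner, inner_proj_eq]
        have hfr := finrank_orth_succ aL ha
        rw [← hK] at hfr
        obtain ⟨c', hc'⟩ := ih K n (by omega)
          (fun i => K.orthogonalProjectionOnto (A i))
          (fun i => B i - ⟪A i, x₀⟫) (K.orthogonalProjectionOnto z) hrecK
        refine ⟨⟪z, x₀⟫ + c', fun x hx => ?_⟩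
        -- slide x along w to the hyperplane ⟪aL, ·⟫ = bL
        set t : ℝ := (bL - ⟪aL, x⟫) / ⟪aL, w⟫ with ht
        have htn : 0 ≤ t := by
          apply div_nonneg _ (le_of_lt hwL)
          have := hx (Fin.last n)
          rw [← haL, ← hbL] at this
          linarith
        set x' : E := x + t • w with hx'
        have haLx' : ⟪aL, x'⟫ = bL := by
          rw [hx', inner_add_right, real_inner_smul_right, ht]
          field_simp
          ring
        obtain ⟨y', hy'⟩ := decomp_of_inner_eq aL ha bL x' haLx'
        have hfeas : ∀ i : Fin n,
            ⟪(K.orthogonalProjectionOnto (A i) : K), y'⟫ ≤ B i - ⟪A i, x₀⟫ := by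
          intro i
          rw [Submodule.coe_inner, inner_proj_eq]
          have h1 : ⟪A i, x'⟫ ≤ B i := by
            rw [hx', inner_add_right, real_inner_smul_right]
            have h2 := hx i.castSucc
            have h3 := mul_nonpos_iff.mpr (Or.inr ⟨hwA i, htn⟩)
            rw [mul_comm] at h3
            simp only [hA, hB] at *
            linarith
          have h4 : (x' : E) = x₀ + (y' : E) := hy'
          have : ⟪A i, x'⟫ = ⟪A i, x₀⟫ + ⟪A i, (y' : E)⟫ := by
            rw [h4, inner_add_right]
          linarith
        have hzy' := hc' y' hfeas
        rw [Submodule.coe_inner, inner_proj_eq] at hzy'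
        have hzx' : ⟪z, x'⟫ = ⟪z, x₀⟫ + ⟪z, (y' : E)⟫ := by
          rw [hy', inner_add_right]
        have hzxx' : ⟪z, x⟫ ≤ ⟪z, x'⟫ := by
          rw [hx', inner_add_right, real_inner_smul_right]
          nlinarith
        linarith

/-- A feasible LP that is bounded above attains its maximum. -/
lemma lp_attain : ∀ (N : ℕ) (E : Type) [NormedAddCommGroup E] [InnerProductSpace ℝ E]
    [FiniteDimensional ℝ E] (n : ℕ), Module.finrank ℝ E + n ≤ N →
    ∀ (a : Fin n → E) (b : Fin n → ℝ) (z : E),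
    (∃ x : E, ∀ i, ⟪a i, x⟫ ≤ b i) →
    (∃ c : ℝ, ∀ x : E, (∀ i, ⟪a i, x⟫ ≤ b i) → ⟪z, x⟫ ≤ c) →
    ∃ x : E, (∀ i, ⟪a i, x⟫ ≤ b i) ∧ ∀ y : E, (∀ i, ⟪a i, y⟫ ≤ b i) → ⟪z, y⟫ ≤ ⟪z, x⟫ := by
  intro N
  induction N with
  | zero =>
    intro E _ _ _ n hN a b z hne hbdd
    have hn : n = 0 := by omega
    subst hn
    obtain ⟨c, hc⟩ := hbdd
    have hz : z = 0 := by
      by_contra h0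
      have hp : (0:ℝ) < ⟪z, z⟫ := by
        rw [real_inner_self_eq_norm_sq]
        exact pow_pos (norm_pos_iff.mpr h0) 2
      have := hc (((c + 1) / ⟪z, z⟫) • z) (fun i => i.elim0)
      rw [real_inner_smul_right, div_mul_cancel₀ _ (ne_of_gt hp)] at this
      linarith
    exact ⟨0, fun i => i.elim0, fun y _ => by simp [hz]⟩
  | succ N ih =>
    intro E _ _ _ n hN a b z hne hbdd
    cases n with
    | zero =>
      obtain ⟨c, hc⟩ := hbdd
      have hz : z = 0 := by
        by_contra h0
        have hp : (0:ℝ) < ⟪z, z⟫ := by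
          rw [real_inner_self_eq_norm_sq]
          exact pow_pos (norm_pos_iff.mpr h0) 2
        have := hc (((c + 1) / ⟪z, z⟫) • z) (fun i => i.elim0)
        rw [real_inner_smul_right, div_mul_cancel₀ _ (ne_of_gt hp)] at this
        linarith
      exact ⟨0, fun i => i.elim0, fun y _ => by simp [hz]⟩
    | succ n =>
      obtain ⟨xh, hxh⟩ := hne
      obtain ⟨c₀, hc₀⟩ := hbdd
      set A : Fin n → E := fun i => a i.castSucc with hA
      set B : Fin n → ℝ := fun i => b i.castSucc with hB
      set aL : E := a (Fin.last n) with haL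
      set bL : ℝ := b (Fin.last n) with hbL
      -- main hyperplane-restriction step, given a dominating point beyond the last constraint
      have key : ∀ y : E, (∀ i : Fin n, ⟪A i, y⟫ ≤ B i) → bL < ⟪aL, y⟫ →
          (∀ x : E, (∀ i : Fin (n+1), ⟪a i, x⟫ ≤ b i) → ⟪z, x⟫ ≤ ⟪z, y⟫) →
          ∃ x : E, (∀ i, ⟪a i, x⟫ ≤ b i) ∧
            ∀ w : E, (∀ i, ⟪a i, w⟫ ≤ b i) → ⟪z, w⟫ ≤ ⟪z, x⟫ := by
        intro y hyA hyL hdom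
        have ha : aL ≠ 0 := by
          intro h0
          have h1 := hxh (Fin.last n)
          rw [← haL, ← hbL, h0, inner_zero_left] at h1
          rw [h0, inner_zero_left] at hyL
          linarith
        set K : Submodule ℝ E := (ℝ ∙ aL)ᗮ with hK
        set x₀ : E := (bL / (‖aL‖ ^ 2)) • aL with hx₀
        have hax₀ : ⟪aL, x₀⟫ = bL := inner_basept aL ha bL
        -- for every feasible x there is a dominating point on the hyperplane
        have seg : ∀ x : E, (∀ i : Fin (n+1), ⟪a i, x⟫ ≤ b i) →
            ∃ w : E, (∀ i : Fin n, ⟪A i, w⟫ ≤ B i) ∧ ⟪aL, w⟫ = bL ∧ ⟪z, x⟫ ≤ ⟪z, w⟫ := by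
          intro x hx
          have hxL : ⟪aL, x⟫ ≤ bL := by
            have := hx (Fin.last n)
            rw [← haL, ← hbL] at this
            exact this
          have hden : (0:ℝ) < ⟪aL, y⟫ - ⟪aL, x⟫ := by linarith
          set t : ℝ := (bL - ⟪aL, x⟫) / (⟪aL, y⟫ - ⟪aL, x⟫) with htdef
          have ht0 : 0 ≤ t := div_nonneg (by linarith) hden.le
          have ht1 : t ≤ 1 := by
            rw [htdef, div_le_one hden]
            linarith
          refine ⟨x + t • (y - x), ?_, ?_, ?_⟩
          · intro i
            rw [inner_add_right, real_inner_smul_right, inner_sub_right]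
            have h1 := hx i.castSucc
            have h2 := hyA i
            simp only [hA, hB] at *
            nlinarith [mul_nonneg ht0 (sub_nonneg.mpr h2),
              mul_nonneg (sub_nonneg.mpr ht1) (sub_nonneg.mpr h1)]
          · rw [inner_add_right, real_inner_smul_right, inner_sub_right, htdef,
              div_mul_cancel₀ _ hden.ne']
            ring
          · rw [inner_add_right, real_inner_smul_right, inner_sub_right]
            have hzxy := hdom x hx
            nlinarith [mul_nonneg ht0 (sub_nonneg.mpr hzxy)]
        -- the restricted problem on K is feasible
        obtain ⟨wh, hwhA, hwhL, _⟩ := seg xh hxh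
        obtain ⟨y₀, hy₀⟩ := decomp_of_inner_eq aL ha bL wh hwhL
        rw [← hx₀] at hy₀
        have hfeas₀ : ∀ i : Fin n,
            ⟪(K.orthogonalProjectionOnto (A i) : K), y₀⟫ ≤ B i - ⟪A i, x₀⟫ := by
          intro i
          rw [Submodule.coe_inner, inner_proj_eq]
          have : ⟪A i, wh⟫ = ⟪A i, x₀⟫ + ⟪A i, (y₀ : E)⟫ := by
            rw [hy₀, inner_add_right]
          have h2 := hwhA i
          linarith
        -- the restricted problem on K is bounded above
        have hbddK : ∀ v : K,
            (∀ i : Fin n, ⟪(K.orthogonalProjectionOnto (A i) : K), v⟫ ≤ B i - ⟪A i, x₀⟫) →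
            ⟪(K.orthogonalProjectionOnto z : K), v⟫ ≤ c₀ - ⟪z, x₀⟫ := by
          intro v hv
          have hfx : ∀ i : Fin (n+1), ⟪a i, x₀ + (v : E)⟫ ≤ b i := by
            refine fun i => Fin.lastCases ?_ ?_ i
            · rw [← haL, ← hbL, inner_add_right, hax₀, inner_span_orth aL v, add_zero]
            · intro j
              have := hv j
              rw [Submodule.coe_inner, inner_proj_eq] at this
              have h3 : ⟪A j, x₀ + (v : E)⟫ = ⟪A j, x₀⟫ + ⟪A j, (v : E)⟫ :=
                inner_add_right _ _ _
              simp only [hA, hB] at *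
              linarith
          have := hc₀ _ hfx
          rw [inner_add_right] at this
          rw [Submodule.coe_inner, inner_proj_eq]
          linarith
        have hfr := finrank_orth_succ aL ha
        rw [← hK] at hfr
        obtain ⟨ym, hymF, hymax⟩ := ih K n (by omega)
          (fun i => K.orthogonalProjectionOnto (A i))
          (fun i => B i - ⟪A i, x₀⟫) (K.orthogonalProjectionOnto z)
          ⟨y₀, hfeas₀⟩ ⟨c₀ - ⟪z, x₀⟫, hbddK⟩
        refine ⟨x₀ + (ym : E), ?_, ?_⟩
        · refine fun i => Fin.lastCases ?_ ?_ i
          · rw [← haL, ← hbL, inner_add_right, hax₀, inner_span_orth aL ym, add_zero]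
          · intro j
            have := hymF j
            rw [Submodule.coe_inner, inner_proj_eq] at this
            have h3 : ⟪A j, x₀ + (ym : E)⟫ = ⟪A j, x₀⟫ + ⟪A j, (ym : E)⟫ :=
              inner_add_right _ _ _
            simp only [hA, hB] at *
            linarith
        · intro x hx
          obtain ⟨w, hwA, hwL, hzxw⟩ := seg x hx
          obtain ⟨yw, hyw⟩ := decomp_of_inner_eq aL ha bL w hwL
          rw [← hx₀] at hyw
          have hfeasw : ∀ i : Fin n,
              ⟪(K.orthogonalProjectionOnto (A i) : K), yw⟫ ≤ B i - ⟪A i, x₀⟫ := by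
            intro i
            rw [Submodule.coe_inner, inner_proj_eq]
            have : ⟪A i, w⟫ = ⟪A i, x₀⟫ + ⟪A i, (yw : E)⟫ := by
              rw [hyw, inner_add_right]
            have h2 := hwA i
            linarith
          have hle := hymax yw hfeasw
          rw [Submodule.coe_inner, inner_proj_eq, Submodule.coe_inner, inner_proj_eq] at hle
          have e1 : ⟪z, w⟫ = ⟪z, x₀⟫ + ⟪z, (yw : E)⟫ := by rw [hyw, inner_add_right]
          have e2 : ⟪z, x₀ + (ym : E)⟫ = ⟪z, x₀⟫ + ⟪z, (ym : E)⟫ := inner_add_right _ _ _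
          linarith
      by_cases hbn : ∃ c : ℝ, ∀ x : E, (∀ i : Fin n, ⟪A i, x⟫ ≤ B i) → ⟪z, x⟫ ≤ c
      · obtain ⟨y, hyF, hymax⟩ := ih E n (by omega) A B z ⟨xh, fun i => hxh i.castSucc⟩ hbn
        by_cases hy : ⟪aL, y⟫ ≤ bL
        · refine ⟨y, fun i => Fin.lastCases ?_ hyF i, fun x hx => hymax x (fun i => hx i.castSucc)⟩
          rw [← haL, ← hbL]
          exact hy
        · push_neg at hy
          exact key y hyF hy (fun x hx => hymax x (fun i => hx i.castSucc))
      · push_neg at hbn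
        obtain ⟨y, hyF, hyc⟩ := hbn c₀
        have hyL : bL < ⟪aL, y⟫ := by
          by_contra h
          push_neg at h
          have : ⟪z, y⟫ ≤ c₀ := hc₀ y (fun i => Fin.lastCases (by rw [← haL, ← hbL]; exact h) hyF i)
          linarith
        exact key y hyF hyL (fun x hx => le_trans (hc₀ x hx) hyc.le)


end Aux

/-- The numb set of a unit linear program contains a half-space: there is a nonzero `u`
such that adding any constraint vector `a` with `⟪u, a⟫ ≤ 0` does not change the set of
upper bounds of the objective `⟪z, ·⟫` on the feasible set `{x : ∀ i, ⟪a i, x⟫ ≤ 1}`. -/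
theorem numb_set_contains_halfspace (d n : ℕ) (hd : 1 ≤ d)
    (a : Fin n → EuclideanSpace ℝ (Fin d)) (z : EuclideanSpace ℝ (Fin d)) :
    ∃ u : EuclideanSpace ℝ (Fin d), u ≠ 0 ∧
      ∀ a' : EuclideanSpace ℝ (Fin d), ⟪u, a'⟫ ≤ 0 →
        ∀ c : ℝ,
          ((∀ x : EuclideanSpace ℝ (Fin d), (∀ i, ⟪a i, x⟫ ≤ 1) → ⟪z, x⟫ ≤ c) ↔
            (∀ x : EuclideanSpace ℝ (Fin d),
              (∀ i, ⟪a i, x⟫ ≤ 1) → ⟪a', x⟫ ≤ 1 → ⟪z, x⟫ ≤ c)) := by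
  classical
  by_cases hbdd : ∃ c : ℝ, ∀ x : EuclideanSpace ℝ (Fin d), (∀ i, ⟪a i, x⟫ ≤ 1) → ⟪z, x⟫ ≤ c
  · obtain ⟨xm, hxF, hxmax⟩ := lp_attain (Module.finrank ℝ (EuclideanSpace ℝ (Fin d)) + n) _ n
      le_rfl a (fun _ => 1) z ⟨0, fun i => by simp⟩ hbdd
    rcases eq_or_ne xm 0 with h0 | h0
    · have hnt : Nontrivial (EuclideanSpace ℝ (Fin d)) := by
        have hfr : Module.finrank ℝ (EuclideanSpace ℝ (Fin d)) = d :=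
          finrank_euclideanSpace_fin
        exact Module.nontrivial_of_finrank_pos (R := ℝ) (by rw [hfr]; omega)
      obtain ⟨u, hu⟩ := exists_ne (0 : EuclideanSpace ℝ (Fin d))
      refine ⟨u, hu, fun a' ha' c => ⟨fun h x hx _ => h x hx, fun h x hx => ?_⟩⟩
      exact le_trans (hxmax x hx) (h xm hxF (by rw [h0, inner_zero_right]; norm_num))
    · refine ⟨xm, h0, fun a' ha' c => ⟨fun h x hx _ => h x hx, fun h x hx => ?_⟩⟩
      have hx1 : ⟪a', xm⟫ ≤ 1 := by
        rw [real_inner_comm]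
        exact le_trans ha' zero_le_one
      exact le_trans (hxmax x hx) (h xm hxF hx1)
  · have hb := lp_bounded (Module.finrank ℝ (EuclideanSpace ℝ (Fin d)) + n) _ n
      le_rfl a (fun _ => 1) z
    have hun : ¬ (∀ v : EuclideanSpace ℝ (Fin d), (∀ i, ⟪a i, v⟫ ≤ 0) → ⟪z, v⟫ ≤ 0) :=
      fun h => hbdd (hb h)
    push_neg at hun
    obtain ⟨v, hvA, hvz⟩ := hun
    have hv0 : v ≠ 0 := by
      rintro rfl
      rw [inner_zero_right] at hvz
      linarith
    refine ⟨v, hv0, fun a' ha' c => ?_⟩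
    constructor
    · intro h
      exact absurd ⟨c, h⟩ hbdd
    · intro h
      exfalso
      set t : ℝ := (|c| + 1) / ⟪z, v⟫ with htdef
      have ht0 : 0 ≤ t := div_nonneg (by positivity) hvz.le
      have hfeas : ∀ i, ⟪a i, t • v⟫ ≤ 1 := by
        intro i
        rw [real_inner_smul_right]
        exact le_trans (mul_nonpos_iff.mpr (Or.inl ⟨ht0, hvA i⟩)) zero_le_one
      have ha'v : ⟪a', t • v⟫ ≤ 1 := by
        rw [real_inner_smul_right]
        have h2 : ⟪a', v⟫ ≤ 0 := by rw [real_inner_comm]; exact ha'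
        exact le_trans (mul_nonpos_iff.mpr (Or.inl ⟨ht0, h2⟩)) zero_le_one
      have hle := h (t • v) hfeas ha'v
      rw [real_inner_smul_right, htdef, div_mul_cancel₀ _ (ne_of_gt hvz)] at hle
      linarith [le_abs_self c]
end

section
/- Let d ≥ 1, let a_1, …, a_n ∈ ℝ^d, let z ∈ ℝ^d, and let F = {x ∈ ℝ^d : ⟨a_i, x⟩ ≤ 1 for all i = 1,…,n}. Then there exists a nonzero vector u ∈ ℝ^d such that for every k ∈ ℕ, every family of vectors c_1, …, c_k ∈ ℝ^d with ⟨u, c_j⟩ ≤ 0 for all j, and every c ∈ ℝ: (⟨z,x⟩ ≤ c for all x ∈ F) if and only if (⟨z,x⟩ ≤ c for all x ∈ F with ⟨c_j, x⟩ ≤ 1 for all j = 1,…,k). That is, adding any finite set of constraint vectors lying in this numb half-space produces a linear program equivalent to the original one. -/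
/-!
The linear program either attains its maximum at some `x₀` or has a recession direction `v`
(`⟪a i, v⟫ ≤ 0` for all `i` and `⟪z, v⟫ > 0`). This dichotomy is proved by induction on the
dimension: if no maximum exists, feasible points improving on `0` escape to infinity along a unit
direction `u` with `⟪a i, u⟫ ≤ 0` and `⟪z, u⟫ ≥ 0`; if `⟪z, u⟫ = 0` one passes to the hyperplane
`u^⊥`, keeping only the constraints orthogonal to `u`, and lifts back by moving far along `u`.

The numb direction `u` is then `x₀` if the maximum is positive, any nonzero vector if it is `0`, and
`v` in the unbounded case: in each case the ray `ℝ≥0 • u` already carries every upper bound of the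
objective, and a constraint `c` with `⟪u, c⟫ ≤ 0` never cuts this ray.
-/

open RealInnerProductSpace

open Filter Topology Module

theorem ContinuousOn.exists_isMaxOn_or_exists_tendsto_norm {E : Type*} [NormedAddCommGroup E]
    [ProperSpace E] {s : Set E} {f : E → ℝ} (hf : ContinuousOn f s) (hs : IsClosed s) {x₀ : E}
    (h₀ : x₀ ∈ s) :
    (∃ x ∈ s, IsMaxOn f s x) ∨
      ∃ x : ℕ → E, (∀ m, x m ∈ s) ∧ Tendsto (‖x ·‖) atTop atTop ∧ ∀ m, f x₀ ≤ f (x m) := by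
  by_cases h : ∀ᶠ x in cocompact E ⊓ 𝓟 s, f x ≤ f x₀
  · exact .inl (hf.exists_isMaxOn' hs h₀ h)
  rw [not_eventually, frequently_inf_principal] at h
  have hfar (m : ℕ) : ∃ x ∈ s, f x₀ ≤ f x ∧ m < ‖x‖ := by
    obtain ⟨x, ⟨hxs, hfx⟩, hx⟩ :=
      (h.and_eventually (tendsto_norm_cocompact_atTop.eventually_gt_atTop (m : ℝ))).exists
    exact ⟨x, hxs, (not_le.1 hfx).le, hx⟩
  choose x hxs hfx hx using hfar
  exact .inr ⟨x, hxs, tendsto_atTop_mono (fun m => (hx m).le) tendsto_natCast_atTop_atTop, hfx⟩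

variable {E : Type*} [NormedAddCommGroup E] [InnerProductSpace ℝ E]

theorem exists_norm_eq_one_forall_inner_nonpos_of_tendsto_norm [FiniteDimensional ℝ E]
    {x : ℕ → E} (hx : Tendsto (‖x ·‖) atTop atTop) :
    ∃ u : E, ‖u‖ = 1 ∧ ∀ (w : E) (C : ℝ), (∀ m, ⟪w, x m⟫ ≤ C) → ⟪w, u⟫ ≤ 0 := by
  set y : ℕ → E := fun m => ‖x m‖⁻¹ • x m
  have hy_norm : ∀ᶠ m in atTop, ‖y m‖ = 1 := by
    filter_upwards [hx.eventually_gt_atTop 0] with m hm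
    simp [y, norm_smul, hm.ne']
  have hy_ball (m : ℕ) : y m ∈ Metric.closedBall (0 : E) 1 := by
    rcases (norm_nonneg (x m)).eq_or_lt with h | h
    · simp [y, ← h]
    · simp [y, norm_smul, h.ne']
  obtain ⟨u, -, φ, hφ, hyu⟩ := tendsto_subseq_of_bounded Metric.isBounded_closedBall hy_ball
  have hinv : Tendsto (fun m => ‖x (φ m)‖⁻¹) atTop (𝓝 0) :=
    (hx.comp hφ.tendsto_atTop).inv_tendsto_atTop
  have hyu_norm : Tendsto (fun m => ‖y (φ m)‖) atTop (𝓝 1) :=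
    tendsto_const_nhds.congr' ((hφ.tendsto_atTop.eventually hy_norm).mono fun _ h => h.symm)
  refine ⟨u, tendsto_nhds_unique hyu.norm hyu_norm, fun w C hC => ?_⟩
  refine le_of_tendsto_of_tendsto' (tendsto_const_nhds.inner hyu) (by simpa using hinv.mul_const C)
    fun m => ?_
  simp only [Function.comp_apply, y, real_inner_smul_right]
  exact mul_le_mul_of_nonneg_left (hC _) (inv_nonneg.2 (norm_nonneg _))

theorem inner_smul_right_le_one_of_inner_nonpos {w u : E} (h : ⟪w, u⟫ ≤ 0) {t : ℝ} (ht : 0 ≤ t) :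
    ⟪w, t • u⟫ ≤ 1 := by
  rw [real_inner_smul_right]
  exact (mul_nonpos_of_nonneg_of_nonpos ht h).trans zero_le_one

theorem inner_orthogonalProjectionOnto_of_mem_left {K : Submodule ℝ E} [K.HasOrthogonalProjection]
    {v : E} (hv : v ∈ K) (y : E) : ⟪v, (K.orthogonalProjectionOnto y : E)⟫ = ⟪v, y⟫ :=
  K.inner_orthogonalProjectionOnto_eq_of_mem_left ⟨v, hv⟩ y

variable {ι : Type*}

theorem exists_forall_inner_add_smul_le [Finite ι] (a : ι → E) (b : ι → ℝ) {u y : E}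
    (hau : ∀ i, ⟪a i, u⟫ ≤ 0) (hy : ∀ i, ⟪a i, u⟫ = 0 → ⟪a i, y⟫ ≤ b i) :
    ∃ t : ℝ, ∀ i, ⟪a i, y + t • u⟫ ≤ b i := by
  have h (i : ι) : ∀ᶠ t : ℝ in atTop, ⟪a i, y⟫ + t * ⟪a i, u⟫ ≤ b i := by
    rcases (hau i).lt_or_eq with hlt | heq
    · exact (tendsto_atBot_add_const_left _ _
        (tendsto_id.atTop_mul_const_of_neg hlt)).eventually_le_atBot (b i)
    · exact .of_forall fun t => by simpa [heq] using hy i heq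
  obtain ⟨t, ht⟩ := (eventually_all.2 h).exists
  exact ⟨t, fun i => by simpa [inner_add_right, real_inner_smul_right] using ht i⟩

def unitPolyhedron (a : ι → E) : Set E := {x | ∀ i, ⟪a i, x⟫ ≤ 1}

theorem zero_mem_unitPolyhedron (a : ι → E) : (0 : E) ∈ unitPolyhedron a :=
  fun i => by simp

theorem isClosed_unitPolyhedron (a : ι → E) : IsClosed (unitPolyhedron a) := by
  simp only [unitPolyhedron, Set.ofPred_forall]
  exact isClosed_iInter fun i => isClosed_le (continuous_const.inner continuous_id) continuous_const

section OrthogonalReduction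

variable {a : ι → E} {z u : E}

/-- The constraints with `⟪a i, u⟫ < 0` are dropped: moving far enough along `u` restores them. -/
noncomputable def restrictOrthogonal (a : ι → E) (u : E) : {i // ⟪a i, u⟫ = 0} → (ℝ ∙ u)ᗮ :=
  fun j => (ℝ ∙ u)ᗮ.orthogonalProjectionOnto (a j)

theorem mem_unitPolyhedron_restrictOrthogonal {w : (ℝ ∙ u)ᗮ} :
    w ∈ unitPolyhedron (restrictOrthogonal a u) ↔ ∀ i, ⟪a i, u⟫ = 0 → ⟪a i, (w : E)⟫ ≤ 1 := by
  simp [unitPolyhedron, restrictOrthogonal]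

theorem exists_isMaxOn_of_restrictOrthogonal [Finite ι] (hau : ∀ i, ⟪a i, u⟫ ≤ 0)
    (hzu : ⟪z, u⟫ = 0)
    (h : ∃ y ∈ unitPolyhedron (restrictOrthogonal a u),
      IsMaxOn (⟪(ℝ ∙ u)ᗮ.orthogonalProjectionOnto z, ·⟫) (unitPolyhedron (restrictOrthogonal a u))
        y) :
    ∃ x ∈ unitPolyhedron a, IsMaxOn (⟪z, ·⟫) (unitPolyhedron a) x := by
  obtain ⟨y, hy, hmax⟩ := h
  rw [mem_unitPolyhedron_restrictOrthogonal] at hy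
  obtain ⟨t, ht⟩ := exists_forall_inner_add_smul_le a 1 hau hy
  refine ⟨y + t • u, ht, fun x hx => ?_⟩
  have hxy := isMaxOn_iff.1 hmax _ <| mem_unitPolyhedron_restrictOrthogonal.2 fun i hi => by
    rw [inner_orthogonalProjectionOnto_of_mem_left
      (Submodule.mem_orthogonal_singleton_iff_inner_left.2 hi)]
    exact hx i
  rw [Submodule.inner_orthogonalProjectionOnto_eq_of_mem_right,
    Submodule.inner_orthogonalProjectionOnto_eq_of_mem_right,
    inner_orthogonalProjectionOnto_of_mem_left
      (Submodule.mem_orthogonal_singleton_iff_inner_left.2 hzu)] at hxy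
  simpa [inner_add_right, real_inner_smul_right, hzu] using hxy

theorem exists_recession_of_restrictOrthogonal [Finite ι] (hau : ∀ i, ⟪a i, u⟫ ≤ 0)
    (hzu : ⟪z, u⟫ = 0)
    (h : ∃ v : (ℝ ∙ u)ᗮ, (∀ j, ⟪restrictOrthogonal a u j, v⟫ ≤ 0) ∧
      0 < ⟪(ℝ ∙ u)ᗮ.orthogonalProjectionOnto z, v⟫) :
    ∃ v : E, (∀ i, ⟪a i, v⟫ ≤ 0) ∧ 0 < ⟪z, v⟫ := by
  obtain ⟨v, hav, hzv⟩ := h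
  obtain ⟨t, ht⟩ := exists_forall_inner_add_smul_le a 0 hau (y := v) fun i hi => by
    simpa [restrictOrthogonal] using hav ⟨i, hi⟩
  refine ⟨v + t • u, ht, ?_⟩
  simpa [inner_add_right, real_inner_smul_right, hzu] using hzv

end OrthogonalReduction

theorem exists_isMaxOn_or_exists_recession [FiniteDimensional ℝ E] [Finite ι] (a : ι → E)
    (z : E) :
    (∃ x ∈ unitPolyhedron a, IsMaxOn (⟪z, ·⟫) (unitPolyhedron a) x) ∨
      ∃ v, (∀ i, ⟪a i, v⟫ ≤ 0) ∧ 0 < ⟪z, v⟫ := by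
  induction hk : finrank ℝ E using Nat.strong_induction_on generalizing E ι with
  | _ k ih =>
    obtain hmax | ⟨x, hxP, hx, hzx⟩ :=
      (continuous_const.inner continuous_id).continuousOn.exists_isMaxOn_or_exists_tendsto_norm
        (isClosed_unitPolyhedron a) (zero_mem_unitPolyhedron a)
    · exact .inl hmax
    obtain ⟨u, hu, hux⟩ := exists_norm_eq_one_forall_inner_nonpos_of_tendsto_norm hx
    have hau (i : ι) : ⟪a i, u⟫ ≤ 0 := hux (a i) 1 fun m => hxP m i
    obtain hzu | hzu := (show 0 ≤ ⟪z, u⟫ by simpa using hux (-z) 0 (by simpa using hzx)).lt_or_eq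
    · exact .inr ⟨u, hau, hzu⟩
    have hdim : finrank ℝ (ℝ ∙ u)ᗮ < k := by
      have hsum := (ℝ ∙ u).finrank_add_finrank_orthogonal
      rw [finrank_span_singleton (norm_ne_zero_iff.1 (hu.trans_ne one_ne_zero))] at hsum
      omega
    obtain h | h := ih _ hdim (restrictOrthogonal a u) ((ℝ ∙ u)ᗮ.orthogonalProjectionOnto z) rfl
    · exact .inl (exists_isMaxOn_of_restrictOrthogonal hau hzu.symm h)
    · exact .inr (exists_recession_of_restrictOrthogonal hau hzu.symm h)

theorem exists_ne_zero_forall_le_of_forall_smul_le [FiniteDimensional ℝ E] [Nontrivial E]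
    [Finite ι] (a : ι → E) (z : E) :
    ∃ u : E, u ≠ 0 ∧ ∀ c : ℝ, (∀ t : ℝ, 0 ≤ t → t • u ∈ unitPolyhedron a → ⟪z, t • u⟫ ≤ c) →
      ∀ x ∈ unitPolyhedron a, ⟪z, x⟫ ≤ c := by
  obtain ⟨x₀, hx₀, hmax⟩ | ⟨v, hav, hzv⟩ := exists_isMaxOn_or_exists_recession a z
  · by_cases hpos : 0 < ⟪z, x₀⟫
    · refine ⟨x₀, fun h => by simp [h] at hpos, fun c hc x hx => ?_⟩
      exact (isMaxOn_iff.1 hmax x hx).trans (by simpa using hc 1 zero_le_one (by simpa using hx₀))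
    · obtain ⟨u, hu⟩ := exists_ne (0 : E)
      refine ⟨u, hu, fun c hc x hx => ?_⟩
      have hc₀ := hc 0 le_rfl (by simpa using zero_mem_unitPolyhedron a)
      simp only [zero_smul, inner_zero_right] at hc₀
      linarith [isMaxOn_iff.1 hmax x hx]
  · refine ⟨v, fun h => by simp [h] at hzv, fun c hc => ?_⟩
    obtain ⟨t, hct, ht⟩ := ((tendsto_id.atTop_mul_const hzv).eventually_gt_atTop c).and
      (eventually_ge_atTop 0) |>.exists
    have hbound := hc t ht fun i => inner_smul_right_le_one_of_inner_nonpos (hav i) ht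
    rw [real_inner_smul_right] at hbound
    exact absurd hbound hct.not_ge

/-- Adding any finite set of constraint vectors lying in the numb half-space produces an
equivalent linear program: there is a nonzero `u` such that for any finitely many vectors
`c_1, …, c_k` with `⟪u, c_j⟫ ≤ 0`, the objective `⟪z, ·⟫` has the same upper bounds on the
feasible set `{x : ∀ i, ⟪a i, x⟫ ≤ 1}` as on its intersection with `{x : ⟪c_j, x⟫ ≤ 1 ∀ j}`. -/
theorem numb_halfspace_add_finitely_many (d n : ℕ) (hd : 1 ≤ d)
    (a : Fin n → EuclideanSpace ℝ (Fin d)) (z : EuclideanSpace ℝ (Fin d)) :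
    ∃ u : EuclideanSpace ℝ (Fin d), u ≠ 0 ∧
      ∀ (k : ℕ) (cs : Fin k → EuclideanSpace ℝ (Fin d)), (∀ j, ⟪u, cs j⟫ ≤ 0) →
        ∀ c : ℝ,
          ((∀ x : EuclideanSpace ℝ (Fin d), (∀ i, ⟪a i, x⟫ ≤ 1) → ⟪z, x⟫ ≤ c) ↔
            (∀ x : EuclideanSpace ℝ (Fin d),
              (∀ i, ⟪a i, x⟫ ≤ 1) → (∀ j, ⟪cs j, x⟫ ≤ 1) → ⟪z, x⟫ ≤ c)) := by
  have : NeZero d := ⟨by omega⟩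
  obtain ⟨u, hu, hray⟩ := exists_ne_zero_forall_le_of_forall_smul_le a z
  refine ⟨u, hu, fun k cs hcs c => ⟨fun h x hx _ => h x hx, fun h => hray c fun t ht htu => ?_⟩⟩
  exact h _ htu fun j =>
    inner_smul_right_le_one_of_inner_nonpos (real_inner_comm u (cs j) ▸ hcs j) ht
end

section
/- Let a_1, …, a_n ∈ ℝ^d, b ∈ ℝ^n, z ∈ ℝ^d, and assume the feasible set P = {x ∈ ℝ^d : ⟨a_i,x⟩ ≤ b_i ∀i} is nonempty. Then the following are equivalent: (a) ⟨z,·⟩ is not bounded above on P; (b) ⟨z,·⟩ is not bounded above on P₀ = {x ∈ ℝ^d : ⟨a_i,x⟩ ≤ 1 ∀i}; (c) for every λ ∈ ℝ, the function (x,t) ↦ ⟨z,x⟩ + λt is not bounded above on Q = {(x,t) ∈ ℝ^d × ℝ : 0 ≤ t ≤ 1 and ⟨a_i,x⟩ ≤ t b_i + (1−t) ∀i}; (d) for some λ ∈ ℝ, (x,t) ↦ ⟨z,x⟩ + λt is not bounded above on Q. -/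
open RealInnerProductSpace

open RealInnerProductSpace Finset

theorem my_farkas {E : Type*} [NormedAddCommGroup E] [InnerProductSpace ℝ E] :
    ∀ (n : ℕ) (a : Fin n → E) (z : E),
      (∃ y : Fin n → ℝ, (∀ i, 0 ≤ y i) ∧ z = ∑ i, y i • a i) ∨
      (∃ w : E, (∀ i, ⟪a i, w⟫ ≤ 0) ∧ 0 < ⟪z, w⟫) := by
  intro n
  induction n with
  | zero =>
    intro a z
    by_cases hz : z = 0
    · exact Or.inl ⟨fun _ => 0, fun i => le_rfl, by simp [hz]⟩
    · exact Or.inr ⟨z, fun i => i.elim0, lt_of_le_of_ne real_inner_self_nonneg (fun h => hz (real_inner_self_nonpos.mp h.ge))⟩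
  | succ n ih =>
    intro a z
    rcases ih (fun i => a i.succ) z with ⟨y, hy, hz⟩ | ⟨w, hw, hzw⟩
    · refine Or.inl ⟨Fin.cons 0 y, ?_, ?_⟩
      · intro i
        refine Fin.cases ?_ ?_ i
        · simp
        · intro j; simpa using hy j
      · rw [Fin.sum_univ_succ]; simpa using hz
    · by_cases h0 : ⟪a 0, w⟫ ≤ 0
      · exact Or.inr ⟨w, fun i => Fin.cases h0 (fun j => hw j) i, hzw⟩
      · push_neg at h0
        have hc : ⟪a 0, w⟫ ≠ 0 := ne_of_gt h0
        rcases ih (fun i => a i.succ - (⟪a i.succ, w⟫ / ⟪a 0, w⟫) • a 0)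
            (z - (⟪z, w⟫ / ⟪a 0, w⟫) • a 0) with ⟨y, hy, hz'⟩ | ⟨w', hw', hz'⟩
        · refine Or.inl ⟨Fin.cons (⟪z, w⟫ / ⟪a 0, w⟫
              - ∑ i, y i * (⟪a i.succ, w⟫ / ⟪a 0, w⟫)) y, ?_, ?_⟩
          · intro i
            refine Fin.cases ?_ ?_ i
            · have h1 : 0 < ⟪z, w⟫ / ⟪a 0, w⟫ := div_pos hzw h0
              have h2 : ∑ i, y i * (⟪a i.succ, w⟫ / ⟪a 0, w⟫) ≤ 0 := by
                apply Finset.sum_nonpos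
                intro i _
                exact mul_nonpos_of_nonneg_of_nonpos (hy i) (div_nonpos_of_nonpos_of_nonneg (hw i) h0.le)
              simpa using by linarith
            · intro j; simpa using hy j
          · rw [Fin.sum_univ_succ]; simp only [Fin.cons_zero, Fin.cons_succ]
            have expand : ∑ i, y i • (a i.succ - (⟪a i.succ, w⟫ / ⟪a 0, w⟫) • a 0)
                = ∑ i, y i • a i.succ - (∑ i, y i * (⟪a i.succ, w⟫ / ⟪a 0, w⟫)) • a 0 := by
              simp only [smul_sub, smul_smul, Finset.sum_sub_distrib, Finset.sum_smul]
            rw [expand] at hz'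
            have hz'' := sub_eq_iff_eq_add.mp hz'
            conv_lhs => rw [hz'']
            rw [sub_smul]
            abel
        · refine Or.inr ⟨w' - (⟪a 0, w'⟫ / ⟪a 0, w⟫) • w, ?_, ?_⟩
          · intro i
            refine Fin.cases ?_ ?_ i
            · rw [inner_sub_right, real_inner_smul_right]
              field_simp
              simp
            · intro j
              have h := hw' j
              rw [inner_sub_left, real_inner_smul_left] at h
              rw [inner_sub_right, real_inner_smul_right]
              have : ⟪a 0, w'⟫ / ⟪a 0, w⟫ * ⟪a j.succ, w⟫
                  = ⟪a j.succ, w⟫ / ⟪a 0, w⟫ * ⟪a 0, w'⟫ := by ring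
              simp only [this]
              linarith [h]
          · rw [inner_sub_left, real_inner_smul_left] at hz'
            rw [inner_sub_right, real_inner_smul_right]
            have : ⟪a 0, w'⟫ / ⟪a 0, w⟫ * ⟪z, w⟫ = ⟪z, w⟫ / ⟪a 0, w⟫ * ⟪a 0, w'⟫ := by ring
              -- equal
            rw [this]
            linarith


/-- Interpolation, unboundedness: assuming (LP) is feasible, the following are equivalent:
(a) the objective of (LP) is not bounded above on `P`;
(b) the objective of (Unit LP) is not bounded above on `P₀`;
(c) for every `λ`, the objective of (Int LP) is not bounded above on `Q`;
(d) for some `λ`, the objective of (Int LP) is not bounded above on `Q`. -/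
theorem interpolation_unbounded_iff (d n : ℕ)
    (a : Fin n → EuclideanSpace ℝ (Fin d)) (b : Fin n → ℝ) (z : EuclideanSpace ℝ (Fin d))
    (hfeas : ∃ x : EuclideanSpace ℝ (Fin d), ∀ i, ⟪a i, x⟫ ≤ b i) :
    ((¬ ∃ c : ℝ, ∀ x : EuclideanSpace ℝ (Fin d), (∀ i, ⟪a i, x⟫ ≤ b i) → ⟪z, x⟫ ≤ c) ↔
      (¬ ∃ c : ℝ, ∀ x : EuclideanSpace ℝ (Fin d), (∀ i, ⟪a i, x⟫ ≤ 1) → ⟪z, x⟫ ≤ c)) ∧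
    ((¬ ∃ c : ℝ, ∀ x : EuclideanSpace ℝ (Fin d), (∀ i, ⟪a i, x⟫ ≤ b i) → ⟪z, x⟫ ≤ c) ↔
      (∀ lam : ℝ, ¬ ∃ c : ℝ, ∀ (x : EuclideanSpace ℝ (Fin d)) (t : ℝ),
        0 ≤ t → t ≤ 1 → (∀ i, ⟪a i, x⟫ ≤ t * b i + (1 - t)) → ⟪z, x⟫ + lam * t ≤ c)) ∧
    ((¬ ∃ c : ℝ, ∀ x : EuclideanSpace ℝ (Fin d), (∀ i, ⟪a i, x⟫ ≤ b i) → ⟪z, x⟫ ≤ c) ↔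
      (∃ lam : ℝ, ¬ ∃ c : ℝ, ∀ (x : EuclideanSpace ℝ (Fin d)) (t : ℝ),
        0 ≤ t → t ≤ 1 → (∀ i, ⟪a i, x⟫ ≤ t * b i + (1 - t)) → ⟪z, x⟫ + lam * t ≤ c)) := by
  obtain ⟨x₀, hx₀⟩ := hfeas
  rcases my_farkas n a z with ⟨y, hy, hz⟩ | ⟨w, hw, hzw⟩
  · have hzx : ∀ x : EuclideanSpace ℝ (Fin d), ⟪z, x⟫ = ∑ i, y i * ⟪a i, x⟫ := by
      intro x
      rw [hz, sum_inner]
      exact Finset.sum_congr rfl fun i _ => real_inner_smul_left _ _ _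
    have bP : ∃ c : ℝ, ∀ x : EuclideanSpace ℝ (Fin d), (∀ i, ⟪a i, x⟫ ≤ b i) → ⟪z, x⟫ ≤ c :=
      ⟨∑ i, y i * b i, fun x hx => by
        rw [hzx]
        exact Finset.sum_le_sum fun i _ => mul_le_mul_of_nonneg_left (hx i) (hy i)⟩
    have bP0 : ∃ c : ℝ, ∀ x : EuclideanSpace ℝ (Fin d), (∀ i, ⟪a i, x⟫ ≤ 1) → ⟪z, x⟫ ≤ c :=
      ⟨∑ i, y i, fun x hx => by
        rw [hzx]
        calc ∑ i, y i * ⟪a i, x⟫ ≤ ∑ i, y i * 1 :=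
              Finset.sum_le_sum fun i _ => mul_le_mul_of_nonneg_left (hx i) (hy i)
          _ = ∑ i, y i := by simp⟩
    have bQ : ∀ lam : ℝ, ∃ c : ℝ, ∀ (x : EuclideanSpace ℝ (Fin d)) (t : ℝ),
        0 ≤ t → t ≤ 1 → (∀ i, ⟪a i, x⟫ ≤ t * b i + (1 - t)) → ⟪z, x⟫ + lam * t ≤ c := by
      intro lam
      refine ⟨(∑ i, y i * (|b i| + 1)) + |lam|, fun x t ht0 ht1 hx => ?_⟩
      have h1 : ⟪z, x⟫ ≤ ∑ i, y i * (|b i| + 1) := by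
        rw [hzx]
        refine Finset.sum_le_sum fun i _ => mul_le_mul_of_nonneg_left ?_ (hy i)
        have h2 := hx i
        have h3 := le_abs_self (b i)
        have h4 := neg_abs_le (b i)
        nlinarith
      have h5 : lam * t ≤ |lam| := by
        have := le_abs_self lam
        have := neg_abs_le lam
        nlinarith
      linarith
    exact ⟨iff_of_false (not_not_intro bP) (not_not_intro bP0),
      iff_of_false (not_not_intro bP) (fun h => h 0 (bQ 0)),
      iff_of_false (not_not_intro bP) (fun h => h.elim fun lam hlam => hlam (bQ lam))⟩
  · have key : ∀ c v : ℝ, ∃ t : ℝ, 0 ≤ t ∧ c < v + t * ⟪z, w⟫ := by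
      intro c v
      refine ⟨max 0 ((c + 1 - v) / ⟪z, w⟫), le_max_left _ _, ?_⟩
      have h1 : (c + 1 - v) / ⟪z, w⟫ ≤ max 0 ((c + 1 - v) / ⟪z, w⟫) := le_max_right _ _
      have h2 := (div_le_iff₀ hzw).mp h1
      linarith
    have hP : ¬ ∃ c : ℝ, ∀ x : EuclideanSpace ℝ (Fin d), (∀ i, ⟪a i, x⟫ ≤ b i) → ⟪z, x⟫ ≤ c := by
      rintro ⟨c, hc⟩
      obtain ⟨t, ht0, ht⟩ := key c ⟪z, x₀⟫
      have hf : ∀ i, ⟪a i, x₀ + t • w⟫ ≤ b i := by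
        intro i
        rw [inner_add_right, real_inner_smul_right]
        nlinarith [hw i, hx₀ i]
      have h := hc _ hf
      rw [inner_add_right, real_inner_smul_right] at h
      linarith
    have hP0 : ¬ ∃ c : ℝ, ∀ x : EuclideanSpace ℝ (Fin d), (∀ i, ⟪a i, x⟫ ≤ 1) → ⟪z, x⟫ ≤ c := by
      rintro ⟨c, hc⟩
      obtain ⟨t, ht0, ht⟩ := key c 0
      have hf : ∀ i, ⟪a i, t • w⟫ ≤ 1 := by
        intro i
        rw [real_inner_smul_right]
        nlinarith [hw i]
      have h := hc _ hf
      rw [real_inner_smul_right] at h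
      linarith
    have hQ : ∀ lam : ℝ, ¬ ∃ c : ℝ, ∀ (x : EuclideanSpace ℝ (Fin d)) (t : ℝ),
        0 ≤ t → t ≤ 1 → (∀ i, ⟪a i, x⟫ ≤ t * b i + (1 - t)) → ⟪z, x⟫ + lam * t ≤ c := by
      intro lam
      rintro ⟨c, hc⟩
      obtain ⟨t, ht0, ht⟩ := key (c - lam) ⟪z, x₀⟫
      have hf : ∀ i, ⟪a i, x₀ + t • w⟫ ≤ 1 * b i + (1 - 1) := by
        intro i
        rw [inner_add_right, real_inner_smul_right]
        nlinarith [hw i, hx₀ i]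
      have h := hc _ 1 zero_le_one le_rfl hf
      rw [inner_add_right, real_inner_smul_right] at h
      linarith
    exact ⟨iff_of_true hP hP0, iff_of_true hP hQ, iff_of_true hP ⟨0, hQ 0⟩⟩
end

section
/- Let a_1, …, a_n ∈ ℝ^d, b ∈ ℝ^n, z ∈ ℝ^d, and assume (LP) is not unbounded (i.e. either P = {x : ⟨a_i,x⟩ ≤ b_i ∀i} is empty or ⟨z,·⟩ is bounded above on P). Then there exists λ₀ ∈ ℝ such that for every λ < λ₀: (1) for every c ∈ ℝ, c is an upper bound of (x,t) ↦ ⟨z,x⟩ + λt on Q = {(x,t) : 0 ≤ t ≤ 1, ⟨a_i,x⟩ ≤ t b_i + (1−t) ∀i} if and only if c is an upper bound of ⟨z,·⟩ on P₀ = {x : ⟨a_i,x⟩ ≤ 1 ∀i}; and (2) every (x,t) ∈ Q maximizing ⟨z,x⟩ + λt over Q satisfies t = 0, and its component x maximizes ⟨z,·⟩ over P₀. -/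
open RealInnerProductSpace

/-!
If every `b i ≤ 1 + B` with `B ≥ 0`, then shrinking a point `x` of the slice `t` of `Q` by the
factor `1 + t B` lands in `P₀`, so `⟨z, x⟩ ≤ (1 + t B) c` for every upper bound `c` of `⟨z, ·⟩`
on `P₀`. Applied to `min c c₀` for a fixed bound `c₀ ≥ 0`, this gives
`⟨z, x⟩ + λ t ≤ c + t (B c₀ + λ)`, so for `λ < -B c₀` raising `t` above `0` only loses, while
the slice `t = 0` of `Q` is `P₀` itself. If `⟨z, ·⟩` is unbounded on `P₀`, both sides of (1)
fail and (Int LP) has no maximizer, for any `λ`.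
-/

theorem exists_nonneg_forall_le_one_add {ι : Type*} [Finite ι] (b : ι → ℝ) :
    ∃ B, 0 ≤ B ∧ ∀ i, b i ≤ 1 + B := by
  obtain ⟨C, hC⟩ := (Set.finite_range b).bddAbove
  refine ⟨max C 0, le_max_right C 0, fun i => ?_⟩
  have : b i ≤ C := hC (Set.mem_range_self i)
  linarith [le_max_left C 0]

section Interpolation

variable {ι E : Type*} [NormedAddCommGroup E] [InnerProductSpace ℝ E] {a : ι → E} {b : ι → ℝ}
  {z : E}

theorem unit_bound_of_interp_bound {lam c : ℝ}
    (h : ∀ (x : E) (t : ℝ), 0 ≤ t → t ≤ 1 →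
      (∀ i, ⟪a i, x⟫ ≤ t * b i + (1 - t)) → ⟪z, x⟫ + lam * t ≤ c)
    (x : E) (hx : ∀ i, ⟪a i, x⟫ ≤ 1) : ⟪z, x⟫ ≤ c := by
  simpa using h x 0 le_rfl zero_le_one (by simpa using hx)

theorem inner_le_one_add_mul_of_unit_bound {B c t : ℝ} (hB : 0 ≤ B) (hbB : ∀ i, b i ≤ 1 + B)
    (hc : ∀ y : E, (∀ i, ⟪a i, y⟫ ≤ 1) → ⟪z, y⟫ ≤ c) (ht : 0 ≤ t) {x : E}
    (hx : ∀ i, ⟪a i, x⟫ ≤ t * b i + (1 - t)) : ⟪z, x⟫ ≤ (1 + t * B) * c := by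
  have hpos : 0 < 1 + t * B := by positivity
  have hshrunk : ∀ i, ⟪a i, (1 + t * B)⁻¹ • x⟫ ≤ 1 := fun i => by
    rw [real_inner_smul_right, inv_mul_le_iff₀ hpos, mul_one]
    linarith [hx i, mul_le_mul_of_nonneg_left (hbB i) ht]
  have := hc _ hshrunk
  rwa [real_inner_smul_right, inv_mul_le_iff₀ hpos] at this

theorem interp_objective_le {B c₀ c lam t : ℝ} (hB : 0 ≤ B) (hbB : ∀ i, b i ≤ 1 + B)
    (hc₀ : ∀ y : E, (∀ i, ⟪a i, y⟫ ≤ 1) → ⟪z, y⟫ ≤ c₀)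
    (hc : ∀ y : E, (∀ i, ⟪a i, y⟫ ≤ 1) → ⟪z, y⟫ ≤ c) (ht : 0 ≤ t) {x : E}
    (hx : ∀ i, ⟪a i, x⟫ ≤ t * b i + (1 - t)) :
    ⟪z, x⟫ + lam * t ≤ c + t * (B * c₀ + lam) := by
  set m := min c c₀
  have hm : ∀ y : E, (∀ i, ⟪a i, y⟫ ≤ 1) → ⟪z, y⟫ ≤ m := fun y hy => le_min (hc y hy) (hc₀ y hy)
  have hm0 : 0 ≤ m := by simpa using hm 0 (by simp)
  have hBm : t * B * m ≤ t * B * c₀ := mul_le_mul_of_nonneg_left (min_le_right c c₀) (by positivity)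
  calc ⟪z, x⟫ + lam * t ≤ (1 + t * B) * m + lam * t := by
        gcongr; exact inner_le_one_add_mul_of_unit_bound hB hbB hm ht hx
    _ ≤ c + t * (B * c₀ + lam) := by linarith [min_le_left c c₀]

theorem interp_bound_iff_unit_bound {B c₀ lam : ℝ} (hB : 0 ≤ B) (hbB : ∀ i, b i ≤ 1 + B)
    (hc₀ : ∀ y : E, (∀ i, ⟪a i, y⟫ ≤ 1) → ⟪z, y⟫ ≤ c₀) (hlam : lam ≤ -(B * c₀)) (c : ℝ) :
    (∀ (x : E) (t : ℝ), 0 ≤ t → t ≤ 1 →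
        (∀ i, ⟪a i, x⟫ ≤ t * b i + (1 - t)) → ⟪z, x⟫ + lam * t ≤ c) ↔
      ∀ x : E, (∀ i, ⟪a i, x⟫ ≤ 1) → ⟪z, x⟫ ≤ c := by
  refine ⟨unit_bound_of_interp_bound, fun hc x t ht _ hx => ?_⟩
  have := interp_objective_le (lam := lam) hB hbB hc₀ hc ht hx
  linarith [mul_nonpos_of_nonneg_of_nonpos ht (by linarith : B * c₀ + lam ≤ 0)]

theorem interp_maximizer {B c₀ lam : ℝ} (hB : 0 ≤ B) (hbB : ∀ i, b i ≤ 1 + B)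
    (hc₀ : ∀ y : E, (∀ i, ⟪a i, y⟫ ≤ 1) → ⟪z, y⟫ ≤ c₀) (hlam : lam < -(B * c₀))
    {x : E} {t : ℝ} (ht : 0 ≤ t) (hx : ∀ i, ⟪a i, x⟫ ≤ t * b i + (1 - t))
    (hmax : ∀ (y : E) (s : ℝ), 0 ≤ s → s ≤ 1 →
      (∀ i, ⟪a i, y⟫ ≤ s * b i + (1 - s)) → ⟪z, y⟫ + lam * s ≤ ⟪z, x⟫ + lam * t) :
    t = 0 ∧ ∀ y : E, (∀ i, ⟪a i, y⟫ ≤ 1) → ⟪z, y⟫ ≤ ⟪z, x⟫ := by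
  have hv := unit_bound_of_interp_bound hmax
  have ht0 : t = 0 := by
    refine le_antisymm (not_lt.1 fun htpos => ?_) ht
    have := interp_objective_le (lam := lam) hB hbB hc₀ hv ht hx
    linarith [mul_neg_of_pos_of_neg htpos (by linarith : B * c₀ + lam < 0)]
  subst ht0
  exact ⟨rfl, by simpa using hv⟩

end Interpolation

theorem interpolation_small_lambda_general (d n : ℕ)
    (a : Fin n → EuclideanSpace ℝ (Fin d)) (b : Fin n → ℝ) (z : EuclideanSpace ℝ (Fin d)) :
    ∃ lam₀ : ℝ, ∀ lam : ℝ, lam < lam₀ →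
      ((∀ c : ℝ,
        (∀ (x : EuclideanSpace ℝ (Fin d)) (t : ℝ), 0 ≤ t → t ≤ 1 →
            (∀ i, ⟪a i, x⟫ ≤ t * b i + (1 - t)) → ⟪z, x⟫ + lam * t ≤ c) ↔
          (∀ x : EuclideanSpace ℝ (Fin d), (∀ i, ⟪a i, x⟫ ≤ 1) → ⟪z, x⟫ ≤ c)) ∧
       (∀ (x : EuclideanSpace ℝ (Fin d)) (t : ℝ), 0 ≤ t → t ≤ 1 →
          (∀ i, ⟪a i, x⟫ ≤ t * b i + (1 - t)) →
          (∀ (y : EuclideanSpace ℝ (Fin d)) (s : ℝ), 0 ≤ s → s ≤ 1 →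
            (∀ i, ⟪a i, y⟫ ≤ s * b i + (1 - s)) → ⟪z, y⟫ + lam * s ≤ ⟪z, x⟫ + lam * t) →
          t = 0 ∧ ∀ y : EuclideanSpace ℝ (Fin d), (∀ i, ⟪a i, y⟫ ≤ 1) → ⟪z, y⟫ ≤ ⟪z, x⟫)) := by
  by_cases hbdd : ∃ c₀ : ℝ, ∀ x : EuclideanSpace ℝ (Fin d), (∀ i, ⟪a i, x⟫ ≤ 1) → ⟪z, x⟫ ≤ c₀
  · obtain ⟨c₀, hc₀⟩ := hbdd
    obtain ⟨B, hB, hbB⟩ := exists_nonneg_forall_le_one_add b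
    exact ⟨-(B * c₀), fun lam hlam =>
      ⟨interp_bound_iff_unit_bound hB hbB hc₀ hlam.le,
        fun x t ht _ hx hmax => interp_maximizer hB hbB hc₀ hlam ht hx hmax⟩⟩
  · exact ⟨0, fun lam _ =>
      ⟨fun c => ⟨unit_bound_of_interp_bound, fun hc => (hbdd ⟨c, hc⟩).elim⟩,
        fun x t _ _ _ hmax => (hbdd ⟨_, unit_bound_of_interp_bound hmax⟩).elim⟩⟩

/-- Interpolation, small `λ`: if (LP) is not unbounded, then for all sufficiently small `λ`,
(1) the objective of (Int LP) has the same upper bounds on `Q` as the objective of (Unit LP)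
has on `P₀`, and (2) every maximizer `(x, t)` of (Int LP) satisfies `t = 0` and its component
`x` maximizes the objective of (Unit LP) over `P₀`. -/
theorem interpolation_small_lambda (d n : ℕ)
    (a : Fin n → EuclideanSpace ℝ (Fin d)) (b : Fin n → ℝ) (z : EuclideanSpace ℝ (Fin d))
    (hnotunb : (∀ x : EuclideanSpace ℝ (Fin d), ¬ ∀ i, ⟪a i, x⟫ ≤ b i) ∨
      (∃ c : ℝ, ∀ x : EuclideanSpace ℝ (Fin d), (∀ i, ⟪a i, x⟫ ≤ b i) → ⟪z, x⟫ ≤ c)) :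
    ∃ lam₀ : ℝ, ∀ lam : ℝ, lam < lam₀ →
      ((∀ c : ℝ,
        (∀ (x : EuclideanSpace ℝ (Fin d)) (t : ℝ), 0 ≤ t → t ≤ 1 →
            (∀ i, ⟪a i, x⟫ ≤ t * b i + (1 - t)) → ⟪z, x⟫ + lam * t ≤ c) ↔
          (∀ x : EuclideanSpace ℝ (Fin d), (∀ i, ⟪a i, x⟫ ≤ 1) → ⟪z, x⟫ ≤ c)) ∧
       (∀ (x : EuclideanSpace ℝ (Fin d)) (t : ℝ), 0 ≤ t → t ≤ 1 →
          (∀ i, ⟪a i, x⟫ ≤ t * b i + (1 - t)) →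
          (∀ (y : EuclideanSpace ℝ (Fin d)) (s : ℝ), 0 ≤ s → s ≤ 1 →
            (∀ i, ⟪a i, y⟫ ≤ s * b i + (1 - s)) → ⟪z, y⟫ + lam * s ≤ ⟪z, x⟫ + lam * t) →
          t = 0 ∧ ∀ y : EuclideanSpace ℝ (Fin d), (∀ i, ⟪a i, y⟫ ≤ 1) → ⟪z, y⟫ ≤ ⟪z, x⟫)) :=
  interpolation_small_lambda_general d n a b z
end

section
/- Let a_1, …, a_n ∈ ℝ^d, b ∈ ℝ^n, z ∈ ℝ^d, and assume (LP) is not unbounded (i.e. either P = {x : ⟨a_i,x⟩ ≤ b_i ∀i} is empty or ⟨z,·⟩ is bounded above on P). Then P is nonempty (i.e. (LP) is feasible) if and only if there exists λ₀ ∈ ℝ such that for every λ ≥ λ₀: the supremum of (x,t) ↦ ⟨z,x⟩ + λt over Q = {(x,t) : 0 ≤ t ≤ 1, ⟨a_i,x⟩ ≤ t b_i + (1−t) ∀i} is attained, and every maximizer (x,t) satisfies t = 1. -/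
open RealInnerProductSpace

section ConeClosed
variable {E : Type*} [NormedAddCommGroup E] [InnerProductSpace ℝ E] [FiniteDimensional ℝ E]

lemma isClosed_coneSet : ∀ (m : ℕ) (v : Fin m → E),
    IsClosed {x : E | ∃ y : Fin m → ℝ, (∀ i, 0 ≤ y i) ∧ ∑ i, y i • v i = x} := by
  intro m
  induction m with
  | zero =>
    intro v
    convert isClosed_singleton (x := (0 : E)) using 1
    ext x
    simp [eq_comm]
  | succ m ih =>
    intro v
    by_cases hv : LinearIndependent ℝ v
    · -- image of the nonnegative orthant under an injective linear map
      set L : (Fin (m+1) → ℝ) →ₗ[ℝ] E :=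
        { toFun := fun y => ∑ i, y i • v i
          map_add' := by
            intro y₁ y₂
            simp [add_smul, Finset.sum_add_distrib]
          map_smul' := by
            intro c y
            simp [smul_smul, Finset.smul_sum] } with hL
      have hker : LinearMap.ker L = ⊥ := by
        rw [LinearMap.ker_eq_bot']
        intro y hy
        have := Fintype.linearIndependent_iff.mp hv y hy
        funext i; exact this i
      have hclosed : Topology.IsClosedEmbedding L := L.isClosedEmbedding_of_injective hker
      have horth : IsClosed {y : Fin (m+1) → ℝ | ∀ i, 0 ≤ y i} := by
        have : {y : Fin (m+1) → ℝ | ∀ i, 0 ≤ y i} = ⋂ i, {y | 0 ≤ y i} := by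
          ext y; simp
        rw [this]
        exact isClosed_iInter fun i => isClosed_le continuous_const (continuous_apply i)
      have himg : {x : E | ∃ y : Fin (m+1) → ℝ, (∀ i, 0 ≤ y i) ∧ ∑ i, y i • v i = x}
          = L '' {y : Fin (m+1) → ℝ | ∀ i, 0 ≤ y i} := by
        ext x
        simp only [Set.mem_image, Set.mem_setOf_eq, hL, LinearMap.coe_mk, AddHom.coe_mk]
      rw [himg]
      exact hclosed.isClosedMap _ horth
    · obtain ⟨g, hgsum, i₀, hgi₀⟩ := Fintype.not_linearIndependent_iff.mp hv
      obtain ⟨g', hg'sum, j₀, hj₀⟩ :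
          ∃ g' : Fin (m+1) → ℝ, (∑ i, g' i • v i = 0) ∧ ∃ j, 0 < g' j := by
        rcases lt_or_gt_of_ne hgi₀ with h | h
        · refine ⟨-g, ?_, i₀, by simpa using h⟩
          simp only [Pi.neg_apply, neg_smul, Finset.sum_neg_distrib, hgsum, neg_zero]
        · exact ⟨g, hgsum, i₀, h⟩
      have hsubset : {x : E | ∃ y : Fin (m+1) → ℝ, (∀ i, 0 ≤ y i) ∧ ∑ i, y i • v i = x}
          = ⋃ j : Fin (m+1),
            {x : E | ∃ y : Fin m → ℝ, (∀ i, 0 ≤ y i) ∧ ∑ i, y i • v (j.succAbove i) = x} := by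
        ext x
        simp only [Set.mem_setOf_eq, Set.mem_iUnion]
        constructor
        · rintro ⟨y, hy, rfl⟩
          set T : Finset (Fin (m+1)) := Finset.univ.filter (fun i => 0 < g' i) with hT
          have hTne : T.Nonempty := ⟨j₀, by simp [hT, hj₀]⟩
          obtain ⟨j, hjT, hjmin⟩ := T.exists_min_image (fun i => y i / g' i) hTne
          have hgj : 0 < g' j := by simpa [hT] using hjT
          set t : ℝ := y j / g' j with ht
          have ht0 : 0 ≤ t := div_nonneg (hy j) hgj.le
          set y' : Fin (m+1) → ℝ := fun i => y i - t * g' i with hy'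
          have hy'0 : ∀ i, 0 ≤ y' i := by
            intro i
            by_cases hgi : 0 < g' i
            · have hmin := hjmin i (by simp [hT, hgi])
              have : t * g' i ≤ y i := by
                rw [ht]
                calc y j / g' j * g' i ≤ y i / g' i * g' i := by
                      exact mul_le_mul_of_nonneg_right hmin hgi.le
                  _ = y i := div_mul_cancel₀ _ hgi.ne'
              simpa [hy'] using sub_nonneg.mpr this
            · push_neg at hgi
              have : t * g' i ≤ 0 := mul_nonpos_of_nonneg_of_nonpos ht0 hgi
              simp only [hy']
              linarith [hy i]
          have hy'j : y' j = 0 := by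
            simp [hy', ht, div_mul_cancel₀ _ hgj.ne']
          have hsum' : ∑ i, y' i • v i = ∑ i, y i • v i := by
            simp only [hy', sub_smul, Finset.sum_sub_distrib]
            have : ∑ i, (t * g' i) • v i = t • ∑ i, g' i • v i := by
              rw [Finset.smul_sum]
              simp [smul_smul]
            rw [this, hg'sum, smul_zero, sub_zero]
          refine ⟨j, fun i => y' (j.succAbove i), fun i => hy'0 _, ?_⟩
          have hdecomp := Fin.sum_univ_succAbove (fun i => y' i • v i) j
          rw [hy'j, zero_smul, zero_add] at hdecomp
          rw [← hdecomp, hsum']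
        · rintro ⟨j, y, hy, rfl⟩
          refine ⟨Fin.insertNth (α := fun _ => ℝ) j 0 y, ?_, ?_⟩
          · intro k
            by_cases hk : k = j
            · subst hk; simp
            · obtain ⟨l, rfl⟩ := Fin.exists_succAbove_eq hk
              simpa using hy l
          · rw [Fin.sum_univ_succAbove (fun i => Fin.insertNth (α := fun _ => ℝ) j 0 y i • v i) j]
            simp
      rw [hsubset]
      exact isClosed_iUnion_of_finite fun j => ih _

end ConeClosed

section Farkas
variable {E : Type*} [NormedAddCommGroup E] [InnerProductSpace ℝ E] [FiniteDimensional ℝ E]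


/-- Farkas' lemma, cone version. -/
lemma farkas_cone {m : ℕ} (v : Fin m → E) (z : E)
    (h : ¬ ∃ y : Fin m → ℝ, (∀ i, 0 ≤ y i) ∧ ∑ i, y i • v i = z) :
    ∃ w : E, (∀ i, ⟪v i, w⟫ ≤ 0) ∧ 0 < ⟪z, w⟫ := by
  set K : ConvexCone ℝ E :=
    { carrier := {x : E | ∃ y : Fin m → ℝ, (∀ i, 0 ≤ y i) ∧ ∑ i, y i • v i = x}
      smul_mem' := by
        rintro c hc x ⟨y, hy, rfl⟩
        exact ⟨fun i => c * y i, fun i => mul_nonneg hc.le (hy i), by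
          rw [Finset.smul_sum]; simp [smul_smul]⟩
      add_mem' := by
        rintro x ⟨y₁, hy₁, rfl⟩ x' ⟨y₂, hy₂, rfl⟩
        exact ⟨fun i => y₁ i + y₂ i, fun i => add_nonneg (hy₁ i) (hy₂ i), by
          simp [add_smul, Finset.sum_add_distrib]⟩ } with hK
  have hne : (K : Set E).Nonempty := ⟨0, ⟨fun _ => 0, fun _ => le_refl 0, by simp⟩⟩
  have hclosed : IsClosed (K : Set E) := isClosed_coneSet m v
  have hz : z ∉ K := h
  obtain ⟨w, hw1, hw2⟩ :=
    ProperCone.hyperplane_separation'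
      (⟨K.toPointedCone (.of_nonempty_of_isClosed hne hclosed), hclosed⟩ : ProperCone ℝ E) hz
  refine ⟨-w, fun i => ?_, ?_⟩
  · rw [inner_neg_right, neg_nonpos]
    refine hw1 (v i) ⟨fun j => if j = i then 1 else 0, fun j => by positivity, ?_⟩
    simp [ite_smul]
  · rw [inner_neg_right, real_inner_comm]
    linarith [real_inner_comm w z]

variable {n : ℕ}

/-- Farkas' lemma, inequality version. -/
lemma farkas_ineq (a : Fin n → E) (b : Fin n → ℝ)
    (h : ¬ ∃ x : E, ∀ i, ⟪a i, x⟫ ≤ b i) :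
    ∃ y : Fin n → ℝ, (∀ i, 0 ≤ y i) ∧ (∑ i, y i • a i = 0) ∧ ∑ i, y i * b i < 0 := by
  set F := WithLp 2 (E × ℝ) with hF
  set P : E × ℝ →ₗ[ℝ] F := (WithLp.linearEquiv 2 ℝ (E × ℝ)).symm.toLinearMap with hP
  set V : Fin (n + 1) → F := Fin.cases (P (0, 1)) (fun i => P (a i, b i)) with hV
  have hfst : ∀ u : E, ∀ r : ℝ, (P (u, r)).fst = u := fun _ _ => rfl
  have hsnd : ∀ u : E, ∀ r : ℝ, (P (u, r)).snd = r := fun _ _ => rfl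
  set fstL : F →ₗ[ℝ] E := (LinearMap.fst ℝ E ℝ).comp (WithLp.linearEquiv 2 ℝ (E × ℝ)).toLinearMap
    with hfstL
  set sndL : F →ₗ[ℝ] ℝ := (LinearMap.snd ℝ E ℝ).comp (WithLp.linearEquiv 2 ℝ (E × ℝ)).toLinearMap
    with hsndL
  have hfstLP : ∀ u : E, ∀ r : ℝ, fstL (P (u, r)) = u := fun _ _ => rfl
  have hsndLP : ∀ u : E, ∀ r : ℝ, sndL (P (u, r)) = r := fun _ _ => rfl
  by_cases hc : ∃ y : Fin (n + 1) → ℝ, (∀ i, 0 ≤ y i) ∧ ∑ i, y i • V i = P (0, -1)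
  · obtain ⟨y, hy, hysum⟩ := hc
    refine ⟨fun i => y i.succ, fun i => hy _, ?_, ?_⟩
    · have := congrArg fstL hysum
      rw [map_sum] at this
      simp only [map_smul, hfstLP] at this
      rw [Fin.sum_univ_succ] at this
      simp only [hV, Fin.cases_zero, Fin.cases_succ, hfstLP, smul_zero, zero_add] at this
      exact this
    · have := congrArg sndL hysum
      rw [map_sum] at this
      simp only [map_smul, hsndLP] at this
      rw [Fin.sum_univ_succ] at this
      simp only [hV, Fin.cases_zero, Fin.cases_succ, hsndLP, smul_eq_mul, mul_one] at this
      have h0 := hy 0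
      nlinarith [this]
  · obtain ⟨w, hw1, hw2⟩ := farkas_cone V (P (0, -1)) hc
    exfalso
    have hinner : ∀ u : E, ∀ r : ℝ, ⟪P (u, r), w⟫ = ⟪u, w.fst⟫ + r * w.snd := by
      intro u r
      rw [WithLp.prod_inner_apply]
      change ⟪u, WithLp.fst w⟫ + ⟪r, WithLp.snd w⟫ = ⟪u, WithLp.fst w⟫ + r * WithLp.snd w
      norm_num [RCLike.inner_apply, mul_comm]
    have hω : ⟪(0 : E), w.fst⟫ + (-1) * w.snd > 0 := by
      rw [← hinner]; exact hw2
    have hωneg : w.snd < 0 := by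
      simpa using hω
    have hwi : ∀ i : Fin n, ⟪a i, w.fst⟫ + b i * w.snd ≤ 0 := by
      intro i
      rw [← hinner]
      exact hw1 i.succ
    apply h
    refine ⟨(-w.snd)⁻¹ • w.fst, fun i => ?_⟩
    rw [real_inner_smul_right]
    have hbi := hwi i
    have hpos : 0 < -w.snd := by linarith
    rw [inv_mul_le_iff₀ hpos]
    nlinarith
end Farkas

section Dual
variable {E : Type*} [NormedAddCommGroup E] [InnerProductSpace ℝ E] [FiniteDimensional ℝ E]
variable {n : ℕ}


/-- If the LP is feasible and bounded, the dual is feasible. -/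
lemma dual_feasible (a : Fin n → E) (b : Fin n → ℝ) (z : E)
    (x₀ : E) (hx₀ : ∀ i, ⟪a i, x₀⟫ ≤ b i) (c : ℝ)
    (hb : ∀ x : E, (∀ i, ⟪a i, x⟫ ≤ b i) → ⟪z, x⟫ ≤ c) :
    ∃ y : Fin n → ℝ, (∀ i, 0 ≤ y i) ∧ ∑ i, y i • a i = z := by
  by_contra h
  obtain ⟨w, hw1, hw2⟩ := farkas_cone a z h
  have hc0 : ⟪z, x₀⟫ ≤ c := hb x₀ hx₀
  set t : ℝ := (c - ⟪z, x₀⟫ + 1) / ⟪z, w⟫ with htdef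
  have ht : 0 ≤ t := by
    apply div_nonneg (by linarith) hw2.le
  have hfeas : ∀ i, ⟪a i, x₀ + t • w⟫ ≤ b i := by
    intro i
    rw [inner_add_right, real_inner_smul_right]
    nlinarith [hw1 i, hx₀ i]
  have := hb _ hfeas
  rw [inner_add_right, real_inner_smul_right, htdef, div_mul_cancel₀ _ hw2.ne'] at this
  linarith
end Dual

section Big
variable {d n : ℕ}


lemma farkas_ineq' {E : Type*} [NormedAddCommGroup E] [InnerProductSpace ℝ E]
    [FiniteDimensional ℝ E] {ι : Type*} [Fintype ι] (a : ι → E) (b : ι → ℝ)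
    (h : ¬ ∃ x : E, ∀ i, ⟪a i, x⟫ ≤ b i) :
    ∃ y : ι → ℝ, (∀ i, 0 ≤ y i) ∧ (∑ i, y i • a i = 0) ∧ ∑ i, y i * b i < 0 := by
  let e := Fintype.equivFin ι
  obtain ⟨y', hy0, hy1, hy2⟩ := farkas_ineq (a ∘ e.symm) (b ∘ e.symm) (by
    intro ⟨x, hx⟩
    exact h ⟨x, fun i => by simpa using hx (e i)⟩)
  refine ⟨fun i => y' (e i), fun i => hy0 _, ?_, ?_⟩
  · rw [← hy1]
    exact Fintype.sum_equiv e _ _ (fun i => by simp)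
  · have hsum : ∑ i : ι, y' (e i) * b i = ∑ j, y' j * (b ∘ e.symm) j :=
      Fintype.sum_equiv e _ _ (fun i => by simp)
    simpa [hsum] using hy2

lemma weak_duality_inner (a : Fin n → EuclideanSpace ℝ (Fin d))
    (y : Fin n → ℝ) (x : EuclideanSpace ℝ (Fin d)) :
    ⟪∑ i, y i • a i, x⟫ = ∑ i, y i * ⟪a i, x⟫ := by
  rw [sum_inner]
  exact Finset.sum_congr rfl fun i _ => real_inner_smul_left _ _ _

set_option maxHeartbeats 1000000 in
lemma lp_strong_duality (a : Fin n → EuclideanSpace ℝ (Fin d)) (b : Fin n → ℝ)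
    (z : EuclideanSpace ℝ (Fin d)) (x₀ : EuclideanSpace ℝ (Fin d)) (hx₀ : ∀ i, ⟪a i, x₀⟫ ≤ b i)
    (yh : Fin n → ℝ) (hyh0 : ∀ i, 0 ≤ yh i) (hyh : ∑ i, yh i • a i = z) :
    ∃ (x : EuclideanSpace ℝ (Fin d)) (y : Fin n → ℝ),
      (∀ i, ⟪a i, x⟫ ≤ b i) ∧ (∀ i, 0 ≤ y i) ∧ (∑ i, y i • a i = z) ∧
        ∑ i, y i * b i ≤ ⟪z, x⟫ := by
  classical
  set P : EuclideanSpace ℝ (Fin d) × EuclideanSpace ℝ (Fin n) →ₗ[ℝ] WithLp 2 (EuclideanSpace ℝ (Fin d) × EuclideanSpace ℝ (Fin n)) := (WithLp.linearEquiv 2 ℝ (EuclideanSpace ℝ (Fin d) × EuclideanSpace ℝ (Fin n))).symm.toLinearMap with hPdef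
  set asEn : (Fin n → ℝ) → EuclideanSpace ℝ (Fin n) := fun f => (WithLp.equiv 2 (Fin n → ℝ)).symm f with hasEn
  set asEd : (Fin d → ℝ) → EuclideanSpace ℝ (Fin d) := fun f => (WithLp.equiv 2 (Fin d → ℝ)).symm f with hasEd
  set col : Fin d → EuclideanSpace ℝ (Fin n) := fun j => asEn (fun i => a i j) with hcol
  set bvec : EuclideanSpace ℝ (Fin n) := asEn b with hbv
  have hcolapp : ∀ j i, col j i = a i j := fun _ _ => rfl
  have hbapp : ∀ i, bvec i = b i := fun _ => rfl
  have hinnEn : ∀ (v w : EuclideanSpace ℝ (Fin n)), ⟪v, w⟫ = ∑ i, v i * w i := by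
    intro v w
    rw [PiLp.inner_apply]
    exact Finset.sum_congr rfl fun i _ => by simp [RCLike.inner_apply, mul_comm]
  have hinnEd : ∀ (v w : EuclideanSpace ℝ (Fin d)), ⟪v, w⟫ = ∑ j, v j * w j := by
    intro v w
    rw [PiLp.inner_apply]
    exact Finset.sum_congr rfl fun j _ => by simp [RCLike.inner_apply, mul_comm]
  have hPfst : ∀ (u : EuclideanSpace ℝ (Fin d)) (r : EuclideanSpace ℝ (Fin n)), (P (u, r)).fst = u := fun _ _ => rfl
  have hPsnd : ∀ (u : EuclideanSpace ℝ (Fin d)) (r : EuclideanSpace ℝ (Fin n)), (P (u, r)).snd = r := fun _ _ => rfl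
  have hinner : ∀ (u : EuclideanSpace ℝ (Fin d)) (r : EuclideanSpace ℝ (Fin n)) (v : WithLp 2 (EuclideanSpace ℝ (Fin d) × EuclideanSpace ℝ (Fin n))), ⟪P (u, r), v⟫ = ⟪u, v.fst⟫ + ⟪r, v.snd⟫ := by
    intro u r v
    rw [WithLp.prod_inner_apply]
    rfl
  set c : (Fin n ⊕ Fin n) ⊕ ((Fin d ⊕ Fin d) ⊕ Fin 1) →
      WithLp 2 (EuclideanSpace ℝ (Fin d) × EuclideanSpace ℝ (Fin n)) := Sum.elim
      (Sum.elim (fun i => P (a i, 0)) (fun i => P (0, -(EuclideanSpace.single i (1:ℝ)))))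
      (Sum.elim (Sum.elim (fun j => P (0, col j)) (fun j => P (0, -col j)))
        (fun _ => P (-z, bvec))) with hc
  set β : (Fin n ⊕ Fin n) ⊕ ((Fin d ⊕ Fin d) ⊕ Fin 1) → ℝ := Sum.elim
      (Sum.elim (fun i => b i) (fun _ => 0))
      (Sum.elim (Sum.elim (fun j => z j) (fun j => -(z j))) (fun _ => 0)) with hβ
  by_cases hfeas : ∃ v : WithLp 2 (EuclideanSpace ℝ (Fin d) × EuclideanSpace ℝ (Fin n)), ∀ row, ⟪c row, v⟫ ≤ β row
  · -- extract solution
    obtain ⟨v, hv⟩ := hfeas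
    set yv : Fin n → ℝ := fun i => v.snd i with hyv
    have hyvapp : ∀ i, yv i = v.snd i := fun _ => rfl
    refine ⟨v.fst, yv, ?_, ?_, ?_, ?_⟩
    · intro i
      have h1 := hv (Sum.inl (Sum.inl i))
      rw [hc] at h1
      simp only [Sum.elim_inl, hβ] at h1
      rw [hinner] at h1
      rw [inner_zero_left, add_zero] at h1
      exact h1
    · intro i
      have h2 := hv (Sum.inl (Sum.inr i))
      rw [hc] at h2
      simp only [Sum.elim_inl, Sum.elim_inr, hβ] at h2
      rw [hinner] at h2
      rw [inner_zero_left, inner_neg_left, EuclideanSpace.inner_single_left] at h2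
      simp only [conj_trivial, one_mul, zero_add] at h2
      rw [hyvapp]
      linarith
    · -- equality constraints
      have hcolz : ∀ j, ⟪col j, v.snd⟫ = z j := by
        intro j
        have h3 := hv (Sum.inr (Sum.inl (Sum.inl j)))
        have h4 := hv (Sum.inr (Sum.inl (Sum.inr j)))
        rw [hc] at h3 h4
        simp only [Sum.elim_inl, Sum.elim_inr, hβ] at h3 h4
        rw [hinner] at h3 h4
        simp only [inner_zero_left, inner_neg_left, zero_add] at h3 h4
        linarith
      refine PiLp.ext fun j => ?_
      have lhs : (∑ i, yv i • a i) j
          = ⟪EuclideanSpace.single j (1:ℝ), ∑ i, yv i • a i⟫ := by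
        rw [EuclideanSpace.inner_single_left]; simp
      rw [lhs, inner_sum]
      simp only [real_inner_smul_right, EuclideanSpace.inner_single_left, conj_trivial, one_mul]
      have := hcolz j
      rw [hinnEn] at this
      calc ∑ i, yv i * a i j = ∑ i, col j i * v.snd i :=
            Finset.sum_congr rfl fun i _ => by rw [hcolapp, hyvapp, mul_comm]
        _ = z j := this
    · have h5 := hv (Sum.inr (Sum.inr 0))
      rw [hc] at h5
      simp only [Sum.elim_inr, hβ] at h5
      rw [hinner] at h5
      rw [inner_neg_left, hinnEn] at h5
      have h6 : ∑ i, bvec i * v.snd i = ∑ i, yv i * b i :=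
        Finset.sum_congr rfl fun i _ => by rw [hbapp, hyvapp, mul_comm]
      rw [h6] at h5
      linarith
  · -- Farkas certificate leads to a contradiction
    exfalso
    obtain ⟨Y, hY0, hYsum, hYrhs⟩ := farkas_ineq' (E := WithLp 2 (EuclideanSpace ℝ (Fin d) × EuclideanSpace ℝ (Fin n))) c β hfeas
    set p : Fin n → ℝ := fun i => Y (Sum.inl (Sum.inl i)) with hp
    set r : Fin n → ℝ := fun i => Y (Sum.inl (Sum.inr i)) with hr
    set uu : Fin d → ℝ := fun j => Y (Sum.inr (Sum.inl (Sum.inl j))) with huu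
    set ww : Fin d → ℝ := fun j => Y (Sum.inr (Sum.inl (Sum.inr j))) with hww
    set θ : ℝ := Y (Sum.inr (Sum.inr 0)) with hθdef
    have hθ0 : 0 ≤ θ := hY0 _
    have hYp : ∀ i, Y (Sum.inl (Sum.inl i)) = p i := fun _ => rfl
    have hYr : ∀ i, Y (Sum.inl (Sum.inr i)) = r i := fun _ => rfl
    have hYu : ∀ j, Y (Sum.inr (Sum.inl (Sum.inl j))) = uu j := fun _ => rfl
    have hYw : ∀ j, Y (Sum.inr (Sum.inl (Sum.inr j))) = ww j := fun _ => rfl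
    have hYθ : Y (Sum.inr (Sum.inr 0)) = θ := rfl
    set fstL : WithLp 2 (EuclideanSpace ℝ (Fin d) × EuclideanSpace ℝ (Fin n)) →ₗ[ℝ]
        EuclideanSpace ℝ (Fin d) :=
      (LinearMap.fst ℝ (EuclideanSpace ℝ (Fin d)) (EuclideanSpace ℝ (Fin n))).comp (WithLp.linearEquiv 2 ℝ (EuclideanSpace ℝ (Fin d) × EuclideanSpace ℝ (Fin n))).toLinearMap with hfstL
    set sndL : WithLp 2 (EuclideanSpace ℝ (Fin d) × EuclideanSpace ℝ (Fin n)) →ₗ[ℝ]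
        EuclideanSpace ℝ (Fin n) :=
      (LinearMap.snd ℝ (EuclideanSpace ℝ (Fin d)) (EuclideanSpace ℝ (Fin n))).comp (WithLp.linearEquiv 2 ℝ (EuclideanSpace ℝ (Fin d) × EuclideanSpace ℝ (Fin n))).toLinearMap with hsndL
    have hfstLP : ∀ (u : EuclideanSpace ℝ (Fin d)) (s : EuclideanSpace ℝ (Fin n)), fstL (P (u, s)) = u := fun _ _ => rfl
    have hsndLP : ∀ (u : EuclideanSpace ℝ (Fin d)) (s : EuclideanSpace ℝ (Fin n)), sndL (P (u, s)) = s := fun _ _ => rfl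
    -- first components
    have hsum1 := congrArg fstL hYsum
    rw [map_sum, map_zero] at hsum1
    simp only [map_smul, hc, Fintype.sum_sum_type, Sum.elim_inl, Sum.elim_inr,
      hfstLP, Fin.sum_univ_one, smul_zero, Finset.sum_const_zero, add_zero, zero_add,
      smul_neg] at hsum1
    simp only [hYp, hYθ] at hsum1
    -- hsum1 : ∑ i, p i • a i + -(θ • z) = 0 (shape to check)
    have hPa : ∑ i, p i • a i = θ • z := by
      have := hsum1
      rw [add_neg_eq_zero] at this
      exact this
    -- second components
    have hsum2 := congrArg sndL hYsum
    rw [map_sum, map_zero] at hsum2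
    simp only [map_smul, hc, Fintype.sum_sum_type, Sum.elim_inl, Sum.elim_inr,
      hsndLP, Fin.sum_univ_one, smul_zero, Finset.sum_const_zero, add_zero, zero_add,
      smul_neg] at hsum2
    set q : EuclideanSpace ℝ (Fin d) := asEd (fun j => uu j - ww j) with hq
    have hqapp : ∀ j, q j = uu j - ww j := fun _ => rfl
    have hkey : ∀ i, ⟪a i, q⟫ + θ * b i = r i := by
      intro i
      have h2i := congrArg
        (fun w : EuclideanSpace ℝ (Fin n) => ⟪EuclideanSpace.single i (1:ℝ), w⟫) hsum2
      simp only [inner_add_right, inner_sum, real_inner_smul_right, inner_neg_right,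
        EuclideanSpace.inner_single_left, conj_trivial, one_mul, inner_zero_right] at h2i
      simp only [PiLp.neg_apply, PiLp.smul_apply, smul_eq_mul, EuclideanSpace.single_apply,
        hcolapp, hbapp, mul_ite, mul_one, mul_zero, Finset.sum_ite_eq', Finset.mem_univ,
        if_true, hYp, hYr, hYu, hYw, hYθ, mul_neg, neg_mul, Finset.sum_neg_distrib,
        Finset.sum_ite_eq] at h2i
      have hzq : ⟪a i, q⟫ = ∑ j, uu j * a i j - ∑ j, ww j * a i j := by
        rw [hinnEd, ← Finset.sum_sub_distrib]
        exact Finset.sum_congr rfl fun j _ => by rw [hqapp]; ring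
      rw [hzq]
      linarith [h2i]
    have hzq2 : ⟪z, q⟫ = ∑ j, uu j * z j - ∑ j, ww j * z j := by
      rw [hinnEd, ← Finset.sum_sub_distrib]
      exact Finset.sum_congr rfl fun j _ => by rw [hqapp]; ring
    -- right-hand side
    rw [hβ] at hYrhs
    simp only [Fintype.sum_sum_type, Sum.elim_inl, Sum.elim_inr, Fin.sum_univ_one,
      mul_zero, Finset.sum_const_zero, add_zero, zero_add, mul_neg] at hYrhs
    simp only [hYp, hYu, hYw] at hYrhs
    -- hYrhs : ∑ i, p i * b i + (∑ j, uu j * z j + ∑ j, -(ww j * z j)) < 0 (shape to check)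
    have hRHS : ∑ i, p i * b i + ⟪z, q⟫ < 0 := by
      rw [hzq2]
      rw [Finset.sum_neg_distrib] at hYrhs
      linarith
    rcases eq_or_lt_of_le hθ0 with hθz | hθpos
    · -- θ = 0
      have hPa0 : ∑ i, p i • a i = 0 := by rw [hPa, ← hθz, zero_smul]
      have h1 : (0:ℝ) ≤ ∑ i, p i * b i := by
        have : ∑ i, p i * ⟪a i, x₀⟫ ≤ ∑ i, p i * b i :=
          Finset.sum_le_sum fun i _ => mul_le_mul_of_nonneg_left (hx₀ i) (hY0 _)
        have h0 : ∑ i, p i * ⟪a i, x₀⟫ = 0 := by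
          rw [← weak_duality_inner, hPa0, inner_zero_left]
        linarith
      have h2 : (0:ℝ) ≤ ⟪z, q⟫ := by
        rw [← hyh, weak_duality_inner]
        apply Finset.sum_nonneg
        intro i _
        have := hkey i
        rw [← hθz] at this
        have : ⟪a i, q⟫ = r i := by linarith
        exact mul_nonneg (hyh0 i) (by rw [this]; exact hY0 (Sum.inl (Sum.inr i)))
      linarith
    · -- θ > 0
      set xh : EuclideanSpace ℝ (Fin d) := (-(θ⁻¹)) • q with hxh
      set y' : Fin n → ℝ := fun i => θ⁻¹ * p i with hy'
      have hfeas' : ∀ i, ⟪a i, xh⟫ ≤ b i := by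
        intro i
        rw [hxh, real_inner_smul_right]
        have hk := hkey i
        have hri : 0 ≤ r i := hY0 (Sum.inl (Sum.inr i))
        have h1 : -⟪a i, q⟫ ≤ θ * b i := by linarith
        have h2 : θ⁻¹ * (θ * b i) = b i := by field_simp
        calc -θ⁻¹ * ⟪a i, q⟫ = θ⁻¹ * -⟪a i, q⟫ := by ring
          _ ≤ θ⁻¹ * (θ * b i) := mul_le_mul_of_nonneg_left h1 (inv_nonneg.mpr hθ0)
          _ = b i := h2
      have hy'z : ∑ i, y' i • a i = z := by
        have : ∑ i, y' i • a i = θ⁻¹ • ∑ i, p i • a i := by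
          rw [Finset.smul_sum]
          exact Finset.sum_congr rfl fun i _ => by rw [hy', smul_smul]
        rw [this, hPa, smul_smul, inv_mul_cancel₀ hθpos.ne', one_smul]
      have hwk : ⟪z, xh⟫ ≤ θ⁻¹ * ∑ i, p i * b i := by
        have h1 : ⟪z, xh⟫ = ∑ i, y' i * ⟪a i, xh⟫ := by
          rw [← hy'z, weak_duality_inner]
        have h2 : ∑ i, y' i * ⟪a i, xh⟫ ≤ ∑ i, y' i * b i :=
          Finset.sum_le_sum fun i _ => mul_le_mul_of_nonneg_left (hfeas' i)
            (mul_nonneg (inv_nonneg.mpr hθ0) (hY0 (Sum.inl (Sum.inl i))))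
        have h3 : ∑ i, y' i * b i = θ⁻¹ * ∑ i, p i * b i := by
          rw [Finset.mul_sum]
          exact Finset.sum_congr rfl fun i _ => by rw [hy']; ring
        linarith
      have hzxh : ⟪z, xh⟫ = -(θ⁻¹) * ⟪z, q⟫ := by
        rw [hxh, real_inner_smul_right]
      have : θ⁻¹ * ∑ i, p i * b i < ⟪z, xh⟫ := by
        rw [hzxh]
        have hinv : 0 < θ⁻¹ := inv_pos.mpr hθpos
        nlinarith [hRHS]
      linarith
end Big

/-- Interpolation, feasibility: assume (LP) is not unbounded. Then (LP) is feasible iff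
there is `λ₀` such that for all `λ ≥ λ₀` the supremum of the objective of (Int LP) over `Q`
is attained and every maximizer `(x, t)` has `t = 1`. -/
theorem interpolation_feasible_iff (d n : ℕ)
    (a : Fin n → EuclideanSpace ℝ (Fin d)) (b : Fin n → ℝ) (z : EuclideanSpace ℝ (Fin d))
    (hnotunb : (∀ x : EuclideanSpace ℝ (Fin d), ¬ ∀ i, ⟪a i, x⟫ ≤ b i) ∨
      (∃ c : ℝ, ∀ x : EuclideanSpace ℝ (Fin d), (∀ i, ⟪a i, x⟫ ≤ b i) → ⟪z, x⟫ ≤ c)) :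
    (∃ x : EuclideanSpace ℝ (Fin d), ∀ i, ⟪a i, x⟫ ≤ b i) ↔
      (∃ lam₀ : ℝ, ∀ lam : ℝ, lam₀ ≤ lam →
        ((∃ (x : EuclideanSpace ℝ (Fin d)) (t : ℝ), 0 ≤ t ∧ t ≤ 1 ∧
            (∀ i, ⟪a i, x⟫ ≤ t * b i + (1 - t)) ∧
            (∀ (y : EuclideanSpace ℝ (Fin d)) (s : ℝ), 0 ≤ s → s ≤ 1 →
              (∀ i, ⟪a i, y⟫ ≤ s * b i + (1 - s)) → ⟪z, y⟫ + lam * s ≤ ⟪z, x⟫ + lam * t)) ∧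
         (∀ (x : EuclideanSpace ℝ (Fin d)) (t : ℝ), 0 ≤ t → t ≤ 1 →
            (∀ i, ⟪a i, x⟫ ≤ t * b i + (1 - t)) →
            (∀ (y : EuclideanSpace ℝ (Fin d)) (s : ℝ), 0 ≤ s → s ≤ 1 →
              (∀ i, ⟪a i, y⟫ ≤ s * b i + (1 - s)) → ⟪z, y⟫ + lam * s ≤ ⟪z, x⟫ + lam * t) →
            t = 1))) := by
  constructor
  · rintro ⟨x₀, hx₀⟩
    obtain ⟨c, hc⟩ : ∃ c : ℝ, ∀ x : EuclideanSpace ℝ (Fin d),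
        (∀ i, ⟪a i, x⟫ ≤ b i) → ⟪z, x⟫ ≤ c := by
      rcases hnotunb with h | h
      · exact absurd hx₀ (h x₀)
      · exact h
    obtain ⟨yh, hyh0, hyh⟩ := dual_feasible a b z x₀ hx₀ c hc
    obtain ⟨xs, ys, hxs, hys0, hyssum, hysb⟩ := lp_strong_duality a b z x₀ hx₀ yh hyh0 hyh
    refine ⟨(∑ i, ys i) - ⟪z, xs⟫ + 1, fun lam hlam => ?_⟩
    have hxsQ : ∀ i, ⟪a i, xs⟫ ≤ 1 * b i + (1 - 1) := by
      intro i
      have := hxs i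
      linarith
    have key : ∀ (w : EuclideanSpace ℝ (Fin d)) (s : ℝ), 0 ≤ s → s ≤ 1 →
        (∀ i, ⟪a i, w⟫ ≤ s * b i + (1 - s)) →
        ⟪z, w⟫ + lam * s ≤ ⟪z, xs⟫ + lam * 1 - (1 - s) := by
      intro w s hs0 hs1 hw
      have h1 : ⟪z, w⟫ = ∑ i, ys i * ⟪a i, w⟫ := by
        rw [← hyssum, weak_duality_inner]
      have h2 : ∑ i, ys i * ⟪a i, w⟫ ≤ ∑ i, ys i * (s * b i + (1 - s)) :=
        Finset.sum_le_sum fun i _ => mul_le_mul_of_nonneg_left (hw i) (hys0 i)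
      have h3 : ∑ i, ys i * (s * b i + (1 - s))
          = s * (∑ i, ys i * b i) + (1 - s) * (∑ i, ys i) := by
        rw [Finset.mul_sum, Finset.mul_sum, ← Finset.sum_add_distrib]
        exact Finset.sum_congr rfl fun i _ => by ring
      have h4 : s * (∑ i, ys i * b i) ≤ s * ⟪z, xs⟫ :=
        mul_le_mul_of_nonneg_left hysb hs0
      have h5 : 0 ≤ (1 - s) * (lam - ((∑ i, ys i) - ⟪z, xs⟫ + 1)) :=
        mul_nonneg (by linarith) (by linarith)
      nlinarith
    constructor
    · refine ⟨xs, 1, zero_le_one, le_refl 1, hxsQ, ?_⟩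
      intro w s hs0 hs1 hw
      have := key w s hs0 hs1 hw
      linarith
    · intro x t ht0 ht1 hx hmax
      by_contra hne
      have ht1' : t < 1 := lt_of_le_of_ne ht1 hne
      have h1 := hmax xs 1 zero_le_one (le_refl 1) hxsQ
      have h2 := key x t ht0 ht1 hx
      linarith
  · rintro ⟨lam₀, h⟩
    obtain ⟨⟨x, t, ht0, ht1, hx, hmax⟩, huniq⟩ := h lam₀ (le_refl lam₀)
    have ht : t = 1 := huniq x t ht0 ht1 hx hmax
    refine ⟨x, fun i => ?_⟩
    have := hx i
    rw [ht] at this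
    linarith
end

section
/- Let a_1, …, a_n ∈ ℝ^d, b ∈ ℝ^n, z ∈ ℝ^d, and assume (LP) is feasible and bounded (P = {x : ⟨a_i,x⟩ ≤ b_i ∀i} is nonempty and ⟨z,·⟩ is bounded above on P). Then there exists λ₀ ∈ ℝ such that for every λ ≥ λ₀: a pair (x,t) ∈ Q = {(x,t) : 0 ≤ t ≤ 1, ⟨a_i,x⟩ ≤ t b_i + (1−t) ∀i} maximizes ⟨z,x⟩ + λt over Q if and only if t = 1 and x maximizes ⟨z,·⟩ over P. -/
open RealInnerProductSpace

lemma isClosed_fgCone {E : Type*} [NormedAddCommGroup E] [NormedSpace ℝ E]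
    [FiniteDimensional ℝ E] :
    ∀ (m : ℕ) (v : Fin m → E),
      IsClosed {x : E | ∃ μ : Fin m → ℝ, (∀ i, 0 ≤ μ i) ∧ x = ∑ i, μ i • v i} := by
  intro m
  induction m with
  | zero =>
    intro v
    convert isClosed_singleton (x := (0 : E)) using 1
    ext x
    simp
  | succ m ih =>
    intro v
    by_cases hli : LinearIndependent ℝ v
    · -- image of the closed orthant under a closed embedding
      set T : (Fin (m + 1) → ℝ) →ₗ[ℝ] E :=
        { toFun := fun μ => ∑ i, μ i • v i
          map_add' := by intro μ ν; simp [add_smul, Finset.sum_add_distrib]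
          map_smul' := by intro c μ; simp [smul_smul, Finset.smul_sum] } with hT
      have hker : LinearMap.ker T = ⊥ := by
        rw [LinearMap.ker_eq_bot]
        rw [injective_iff_map_eq_zero]
        intro μ hμ
        funext i
        exact Fintype.linearIndependent_iff.mp hli μ hμ i
      have hemb := T.isClosedEmbedding_of_injective hker
      have horth : IsClosed {μ : Fin (m + 1) → ℝ | ∀ i, 0 ≤ μ i} := by
        have : {μ : Fin (m + 1) → ℝ | ∀ i, 0 ≤ μ i} = ⋂ i, {μ | 0 ≤ μ i} := by
          ext; simp
        rw [this]
        exact isClosed_iInter fun i => isClosed_le continuous_const (continuous_apply i)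
      have himg : {x : E | ∃ μ : Fin (m+1) → ℝ, (∀ i, 0 ≤ μ i) ∧ x = ∑ i, μ i • v i}
          = T '' {μ | ∀ i, 0 ≤ μ i} := by
        ext x
        constructor
        · rintro ⟨μ, hμ, rfl⟩; exact ⟨μ, hμ, rfl⟩
        · rintro ⟨μ, hμ, rfl⟩; exact ⟨μ, hμ, rfl⟩
      rw [himg]
      exact hemb.isClosedMap _ horth
    · obtain ⟨g, hgsum, j, hgj⟩ := Fintype.not_linearIndependent_iff.mp hli
      obtain ⟨c, hcsum, i₁, hci₁⟩ :
          ∃ c : Fin (m + 1) → ℝ, ∑ i, c i • v i = 0 ∧ ∃ i, 0 < c i := by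
        rcases hgj.lt_or_gt with h | h
        · exact ⟨-g, by simp [hgsum], j, by simpa using h⟩
        · exact ⟨g, hgsum, j, h⟩
      have hunion : {x : E | ∃ μ : Fin (m+1) → ℝ, (∀ i, 0 ≤ μ i) ∧ x = ∑ i, μ i • v i}
          = ⋃ i : Fin (m + 1),
            {x : E | ∃ ν : Fin m → ℝ, (∀ k, 0 ≤ ν k) ∧ x = ∑ k, ν k • v (i.succAbove k)} := by
        ext x
        constructor
        · rintro ⟨μ, hμ, rfl⟩
          have hF : i₁ ∈ Finset.univ.filter (fun i => 0 < c i) := by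
            simp [hci₁]
          obtain ⟨i0, hi0, hmin⟩ := Finset.exists_min_image
            (Finset.univ.filter (fun i => 0 < c i)) (fun i => μ i / c i) ⟨i₁, hF⟩
          have hc0 : 0 < c i0 := (Finset.mem_filter.mp hi0).2
          set t : ℝ := μ i0 / c i0 with htdef
          have ht : 0 ≤ t := div_nonneg (hμ i0) hc0.le
          set μ' : Fin (m + 1) → ℝ := fun k => μ k - t * c k with hμ'
          have hμ'0 : ∀ k, 0 ≤ μ' k := by
            intro k
            by_cases hk : 0 < c k
            · have : t ≤ μ k / c k := hmin k (by simp [hk])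
              have := (le_div_iff₀ hk).mp this
              simp only [hμ']
              linarith
            · push_neg at hk
              have : t * c k ≤ 0 := mul_nonpos_of_nonneg_of_nonpos ht hk
              simp only [hμ']
              linarith [hμ k]
          have hμ'i0 : μ' i0 = 0 := by
            simp only [hμ', htdef]
            field_simp
            simp
          have hxsum : ∑ i, μ i • v i = ∑ i, μ' i • v i := by
            simp only [hμ', sub_smul, mul_smul, Finset.sum_sub_distrib]
            rw [← Finset.smul_sum, hcsum, smul_zero, sub_zero]
          refine Set.mem_iUnion.mpr ⟨i0, fun k => μ' (i0.succAbove k), fun k => hμ'0 _, ?_⟩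
          rw [hxsum, Fin.sum_univ_succAbove (fun i => μ' i • v i) i0, hμ'i0, zero_smul, zero_add]
        · intro hx
          obtain ⟨i, ν, hν, rfl⟩ := Set.mem_iUnion.mp hx
          refine ⟨i.insertNth (α := fun _ => ℝ) 0 ν, ?_, ?_⟩
          · intro k
            by_cases hk : k = i
            · subst hk; simp
            · obtain ⟨l, rfl⟩ := Fin.exists_succAbove_eq hk
              simpa using hν l
          · rw [eq_comm, Fin.sum_univ_succAbove (fun k => (i.insertNth (α := fun _ => ℝ) 0 ν) k • v k) i]
            simp
      rw [hunion]
      exact isClosed_iUnion_of_finite fun i => ih (fun k => v (i.succAbove k))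

lemma farkas_dual (d n : ℕ) (a : Fin n → EuclideanSpace ℝ (Fin d)) (b : Fin n → ℝ)
    (z : EuclideanSpace ℝ (Fin d)) (M : ℝ)
    (hfeas : ∃ x : EuclideanSpace ℝ (Fin d), ∀ i, ⟪a i, x⟫ ≤ b i)
    (hbdd : ∀ x : EuclideanSpace ℝ (Fin d), (∀ i, ⟪a i, x⟫ ≤ b i) → ⟪z, x⟫ ≤ M) :
    ∃ μ : Fin n → ℝ, (∀ i, 0 ≤ μ i) ∧ z = ∑ i, μ i • a i ∧ ∑ i, μ i * b i ≤ M := by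
  classical
  haveI : FiniteDimensional ℝ (WithLp 2 ((EuclideanSpace ℝ (Fin d)) × ℝ)) :=
    Module.Finite.equiv (WithLp.linearEquiv 2 ℝ _).symm
  set e : WithLp 2 ((EuclideanSpace ℝ (Fin d)) × ℝ) ≃ₗ[ℝ] (EuclideanSpace ℝ (Fin d)) × ℝ :=
    WithLp.linearEquiv 2 ℝ _ with he
  set w : Fin (n + 1) → (EuclideanSpace ℝ (Fin d)) × ℝ :=
    Fin.cons (0, 1) (fun i => (a i, b i)) with hw
  set v : Fin (n + 1) → WithLp 2 ((EuclideanSpace ℝ (Fin d)) × ℝ) := fun j => e.symm (w j) with hv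
  set K : ConvexCone ℝ (WithLp 2 ((EuclideanSpace ℝ (Fin d)) × ℝ)) :=
    { carrier := {x : WithLp 2 ((EuclideanSpace ℝ (Fin d)) × ℝ) | ∃ μ : Fin (n + 1) → ℝ, (∀ i, 0 ≤ μ i) ∧ x = ∑ i, μ i • v i}
      smul_mem' := by
        rintro c hc x ⟨μ, hμ, rfl⟩
        exact ⟨fun i => c * μ i, fun i => mul_nonneg hc.le (hμ i),
          by simp [Finset.smul_sum, smul_smul]⟩
      add_mem' := by
        rintro x ⟨μ, hμ, rfl⟩ y ⟨ν, hν, rfl⟩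
        exact ⟨fun i => μ i + ν i, fun i => add_nonneg (hμ i) (hν i),
          by simp [add_smul, Finset.sum_add_distrib]⟩ } with hK
  have hvmem : ∀ j, v j ∈ K := by
    intro j
    refine ⟨fun k => if k = j then 1 else 0, fun k => by positivity, ?_⟩
    rw [Finset.sum_eq_single j]
    · simp
    · intro k _ hk; simp [hk]
    · simp
  have hne : (K : Set (WithLp 2 ((EuclideanSpace ℝ (Fin d)) × ℝ))).Nonempty := ⟨v 0, hvmem 0⟩
  have hclosed : IsClosed (K : Set (WithLp 2 ((EuclideanSpace ℝ (Fin d)) × ℝ))) := isClosed_fgCone (n + 1) v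
  obtain ⟨x₀, hx₀⟩ := hfeas
  have hmem : e.symm (z, M) ∈ K := by
    by_contra hnm
    obtain ⟨y, hy1, hy2⟩ :=
      (by
        let C : ProperCone ℝ (WithLp 2 ((EuclideanSpace ℝ (Fin d)) × ℝ)) :=
          { carrier := (K : Set (WithLp 2 ((EuclideanSpace ℝ (Fin d)) × ℝ)))
            add_mem' := fun ha hb => K.add_mem ha hb
            zero_mem' := ⟨0, fun _ => le_rfl, by simp⟩
            smul_mem' := by
              rintro c x ⟨μ, hμ, rfl⟩
              exact ⟨fun i => (c : ℝ) * μ i, fun i => mul_nonneg c.2 (hμ i),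
                by
                  change ((c : ℝ) • ∑ i, μ i • v i) = ∑ i, ((c : ℝ) * μ i) • v i
                  simp [Finset.smul_sum, smul_smul]⟩
            isClosed' := hclosed }
        obtain ⟨y, hy1, hy2⟩ := ProperCone.hyperplane_separation' C (x₀ := e.symm (z, M)) hnm
        exact ⟨y, hy1, by rw [real_inner_comm]; exact hy2⟩ :
        ∃ y, (∀ x ∈ K, 0 ≤ ⟪x, y⟫) ∧ ⟪y, e.symm (z, M)⟫ < 0)
    -- decompose y
    have hinner : ∀ (p : EuclideanSpace ℝ (Fin d)) (r : ℝ),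
        ⟪e.symm (p, r), y⟫ = ⟪p, (e y).1⟫ + r * (e y).2 := by
      intro p r
      simp [he, WithLp.prod_inner_apply, RCLike.inner_apply]
      ring
    set u : EuclideanSpace ℝ (Fin d) := (e y).1 with hu
    set γ : ℝ := (e y).2 with hγ
    have hγ0 : 0 ≤ γ := by
      have := hy1 _ (hvmem 0)
      simpa [hv, hw, hinner] using this
    have hai : ∀ i, 0 ≤ ⟪a i, u⟫ + b i * γ := by
      intro i
      have := hy1 _ (hvmem i.succ)
      simpa [hv, hw, hinner] using this
    have hzM : ⟪z, u⟫ + M * γ < 0 := by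
      have h2 := hy2
      rw [real_inner_comm, hinner] at h2
      exact h2
    rcases eq_or_lt_of_le hγ0 with hγe | hγp
    · -- γ = 0 : unboundedness contradiction
      have hzu : ⟪z, u⟫ < 0 := by rw [← hγe] at hzM; linarith
      set τ : ℝ := (M - ⟪z, x₀⟫ + 1) / (-⟪z, u⟫) with hτ
      have hM0 : ⟪z, x₀⟫ ≤ M := hbdd x₀ hx₀
      have hτ0 : 0 ≤ τ := div_nonneg (by linarith) (by linarith)
      have hfeas' : ∀ i, ⟪a i, x₀ - τ • u⟫ ≤ b i := by
        intro i
        have h1 : 0 ≤ ⟪a i, u⟫ := by have := hai i; rw [← hγe] at this; linarith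
        rw [inner_sub_right, real_inner_smul_right]
        have : 0 ≤ τ * ⟪a i, u⟫ := mul_nonneg hτ0 h1
        linarith [hx₀ i]
      have := hbdd _ hfeas'
      rw [inner_sub_right, real_inner_smul_right] at this
      have hτz : τ * -⟪z, u⟫ = M - ⟪z, x₀⟫ + 1 :=
        div_mul_cancel₀ _ (by linarith : -⟪z, u⟫ ≠ 0)
      nlinarith [this, hτz]
    · -- γ > 0 : the point -γ⁻¹ • u is feasible with value > M
      have hfeas' : ∀ i, ⟪a i, (-γ⁻¹) • u⟫ ≤ b i := by
        intro i
        rw [real_inner_smul_right]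
        have h : -⟪a i, u⟫ ≤ b i * γ := by linarith [hai i]
        calc -γ⁻¹ * ⟪a i, u⟫ = γ⁻¹ * -⟪a i, u⟫ := by ring
          _ ≤ γ⁻¹ * (b i * γ) := mul_le_mul_of_nonneg_left h (inv_nonneg.mpr hγp.le)
          _ = b i := by field_simp
      have hval := hbdd _ hfeas'
      rw [real_inner_smul_right] at hval
      have h2 := mul_le_mul_of_nonneg_left hval hγp.le
      have hL : γ * (-γ⁻¹ * ⟪z, u⟫) = -⟪z, u⟫ := by field_simp
      rw [hL] at h2
      nlinarith
  obtain ⟨ν, hν, hsum⟩ := hmem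
  have hsum' : (z, M) = ∑ i, ν i • w i := by
    have h := congrArg e hsum
    rw [e.apply_symm_apply, map_sum] at h
    rw [h]
    refine Finset.sum_congr rfl fun i _ => ?_
    simp only [map_smul, hv, LinearEquiv.apply_symm_apply]
  have hz : z = ∑ i, ν i.succ • a i := by
    have h1 := congrArg Prod.fst hsum'
    simp only [Prod.fst_sum, Prod.smul_fst] at h1
    rw [h1, Fin.sum_univ_succ]
    simp [hw]
  have hM : M = ν 0 + ∑ i, ν i.succ * b i := by
    have h2 := congrArg Prod.snd hsum'
    simp only [Prod.snd_sum, Prod.smul_snd, smul_eq_mul] at h2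
    rw [h2, Fin.sum_univ_succ]
    simp [hw, mul_comm]
  exact ⟨fun i => ν i.succ, fun i => hν i.succ, hz, by rw [hM]; linarith [hν 0]⟩

/-- Interpolation, large `λ`: if (LP) is feasible and bounded, then for all sufficiently
large `λ`, a pair `(x, t) ∈ Q` maximizes the objective of (Int LP) over `Q` if and only if
`t = 1` and `x` maximizes `⟪z, ·⟫` over `P`. -/
theorem interpolation_large_lambda (d n : ℕ)
    (a : Fin n → EuclideanSpace ℝ (Fin d)) (b : Fin n → ℝ) (z : EuclideanSpace ℝ (Fin d))
    (hfeas : ∃ x : EuclideanSpace ℝ (Fin d), ∀ i, ⟪a i, x⟫ ≤ b i)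
    (hbdd : ∃ c : ℝ, ∀ x : EuclideanSpace ℝ (Fin d), (∀ i, ⟪a i, x⟫ ≤ b i) → ⟪z, x⟫ ≤ c) :
    ∃ lam₀ : ℝ, ∀ lam : ℝ, lam₀ ≤ lam →
      ∀ (x : EuclideanSpace ℝ (Fin d)) (t : ℝ), 0 ≤ t → t ≤ 1 →
        (∀ i, ⟪a i, x⟫ ≤ t * b i + (1 - t)) →
        ((∀ (y : EuclideanSpace ℝ (Fin d)) (s : ℝ), 0 ≤ s → s ≤ 1 →
            (∀ i, ⟪a i, y⟫ ≤ s * b i + (1 - s)) → ⟪z, y⟫ + lam * s ≤ ⟪z, x⟫ + lam * t) ↔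
          (t = 1 ∧ ∀ y : EuclideanSpace ℝ (Fin d), (∀ i, ⟪a i, y⟫ ≤ b i) → ⟪z, y⟫ ≤ ⟪z, x⟫)) := by
  obtain ⟨x₀, hx₀⟩ := hfeas
  obtain ⟨c, hc⟩ := hbdd
  -- the optimal value of (LP)
  set S : Set ℝ := (fun x => ⟪z, x⟫) '' {x | ∀ i, ⟪a i, x⟫ ≤ b i} with hS
  have hSne : S.Nonempty := ⟨⟪z, x₀⟫, x₀, hx₀, rfl⟩
  have hSbdd : BddAbove S := ⟨c, by rintro r ⟨p, hp, rfl⟩; exact hc p hp⟩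
  set M : ℝ := sSup S with hM
  have hMub : ∀ x : EuclideanSpace ℝ (Fin d), (∀ i, ⟪a i, x⟫ ≤ b i) → ⟪z, x⟫ ≤ M :=
    fun x hx => le_csSup hSbdd ⟨x, hx, rfl⟩
  obtain ⟨μ, hμ0, hz, hμb⟩ := farkas_dual d n a b z M ⟨x₀, hx₀⟩ hMub
  -- key bound on the interpolated polytope
  have hkey : ∀ (y : EuclideanSpace ℝ (Fin d)) (s : ℝ), 0 ≤ s →
      (∀ i, ⟪a i, y⟫ ≤ s * b i + (1 - s)) →
      ⟪z, y⟫ ≤ s * M + (1 - s) * ∑ i, μ i := by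
    intro y s hs0 hy
    have h1 : ⟪z, y⟫ = ∑ i, μ i * ⟪a i, y⟫ := by
      rw [hz, sum_inner]
      exact Finset.sum_congr rfl fun i _ => real_inner_smul_left _ _ _
    have h2 : ∑ i, μ i * ⟪a i, y⟫ ≤ ∑ i, μ i * (s * b i + (1 - s)) :=
      Finset.sum_le_sum fun i _ => mul_le_mul_of_nonneg_left (hy i) (hμ0 i)
    have h3 : ∑ i, μ i * (s * b i + (1 - s))
        = s * (∑ i, μ i * b i) + (1 - s) * ∑ i, μ i := by
      rw [Finset.mul_sum, Finset.mul_sum, ← Finset.sum_add_distrib]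
      exact Finset.sum_congr rfl fun i _ => by ring
    have h4 : s * (∑ i, μ i * b i) ≤ s * M := mul_le_mul_of_nonneg_left hμb hs0
    linarith
  refine ⟨max (∑ i, μ i - M) 0 + 1, fun lam hlam x t ht0 ht1 hxt => ?_⟩
  have hlam1 : ∑ i, μ i - M ≤ lam - 1 := by
    have := le_max_left (∑ i, μ i - M) 0
    linarith
  constructor
  · intro hopt
    have hMle : M ≤ ⟪z, x⟫ + lam * t - lam := by
      refine csSup_le hSne ?_
      rintro r ⟨p, hp, rfl⟩
      have := hopt p 1 zero_le_one le_rfl (fun i => by simpa using hp i)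
      linarith
    have hxb := hkey x t ht0 hxt
    have ht : t = 1 := by
      have hprod : (1 - t) * (∑ i, μ i - M) ≤ (1 - t) * (lam - 1) :=
        mul_le_mul_of_nonneg_left hlam1 (by linarith)
      nlinarith
    subst ht
    have hxP : ∀ i, ⟪a i, x⟫ ≤ b i := fun i => by simpa using hxt i
    refine ⟨rfl, fun y hy => ?_⟩
    have := hopt y 1 zero_le_one le_rfl (fun i => by simpa using hy i)
    linarith
  · rintro ⟨ht, hoptx⟩
    subst ht
    intro y s hs0 hs1 hy
    have hyb := hkey y s hs0 hy
    have hMx : M ≤ ⟪z, x⟫ := by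
      refine csSup_le hSne ?_
      rintro r ⟨p, hp, rfl⟩
      exact hoptx p hp
    have h5 : s * M ≤ s * ⟪z, x⟫ := mul_le_mul_of_nonneg_left hMx hs0
    have h6 : (1 - s) * (∑ i, μ i) ≤ (1 - s) * (M + lam - 1) :=
      mul_le_mul_of_nonneg_left (by linarith) (by linarith)
    have h7 : (1 - s) * (M + lam - 1) ≤ (1 - s) * (⟪z, x⟫ + lam - 1) :=
      mul_le_mul_of_nonneg_left (by linarith) (by linarith)
    nlinarith
end

section
/- Let a_1, …, a_n ∈ ℝ^d, b ∈ ℝ^n, z ∈ ℝ^d, and assume P = {x ∈ ℝ^d : ⟨a_i,x⟩ ≤ b_i ∀i} is nonempty. Then ⟨z,·⟩ is bounded above on P if and only if z lies in the conic hull of {a_1, …, a_n}, i.e. if and only if there exist λ_1, …, λ_n ≥ 0 with z = λ_1 a_1 + ⋯ + λ_n a_n. -/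
open RealInnerProductSpace

variable {E : Type*} [NormedAddCommGroup E] [NormedSpace ℝ E]

/-- The conic hull of a finite family is closed. -/
theorem isClosed_conicHull : ∀ (n : ℕ) (a : Fin n → E),
    IsClosed {x : E | ∃ lam : Fin n → ℝ, (∀ i, 0 ≤ lam i) ∧ x = ∑ i, lam i • a i} := by
  intro n
  induction n with
  | zero =>
      intro a
      convert isClosed_singleton (x := (0 : E)) using 1
      ext x
      simp
  | succ n ih =>
      intro a
      by_cases hli : LinearIndependent ℝ a
      · -- image of the closed positive orthant under a closed embedding
        set L : (Fin (n+1) → ℝ) →ₗ[ℝ] E :=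
          { toFun := fun lam => ∑ i, lam i • a i
            map_add' := by
              intro x y
              simp [add_smul, Finset.sum_add_distrib]
            map_smul' := by
              intro c x
              simp [smul_smul, Finset.smul_sum] } with hL
        have hinj : LinearMap.ker L = ⊥ := by
          rw [LinearMap.ker_eq_bot']
          intro m hm
          have := Fintype.linearIndependent_iff.mp hli m hm
          funext i; exact this i
        have hemb := L.isClosedEmbedding_of_injective hinj
        have : {x : E | ∃ lam : Fin (n+1) → ℝ, (∀ i, 0 ≤ lam i) ∧ x = ∑ i, lam i • a i}
            = L '' {lam | ∀ i, 0 ≤ lam i} := by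
          ext x
          constructor
          · rintro ⟨lam, h1, h2⟩; exact ⟨lam, h1, h2.symm⟩
          · rintro ⟨lam, h1, h2⟩; exact ⟨lam, h1, h2.symm⟩
        rw [this]
        refine hemb.isClosedMap _ ?_
        have : {lam : Fin (n+1) → ℝ | ∀ i, 0 ≤ lam i} = ⋂ i, {lam | 0 ≤ lam i} := by
          ext; simp [Set.mem_iInter]
        rw [this]
        exact isClosed_iInter fun i =>
          isClosed_le continuous_const (continuous_apply i)
      · -- linearly dependent: the cone is a finite union of cones on subfamilies
        rw [Fintype.not_linearIndependent_iff] at hli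
        obtain ⟨g, hg0, i₀, hgi₀⟩ := hli
        have key : ∀ (c : Fin (n+1) → ℝ), (∑ i, c i • a i = 0) → (∃ j, 0 < c j) →
            ∀ x (lam : Fin (n+1) → ℝ), (∀ i, 0 ≤ lam i) → x = ∑ i, lam i • a i →
            ∃ j, ∃ mu : Fin (n+1) → ℝ, (∀ i, 0 ≤ mu i) ∧ mu j = 0 ∧
              x = ∑ i, mu i • a i := by
          intro c hc ⟨j₀, hj₀⟩ x lam hlam hx
          have hsne : (Finset.univ.filter (fun i => 0 < c i)).Nonempty :=
            ⟨j₀, by simp [hj₀]⟩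
          obtain ⟨j, hjmem, hjmin⟩ := Finset.exists_min_image _ (fun i => lam i / c i) hsne
          simp only [Finset.mem_filter, Finset.mem_univ, true_and] at hjmem hjmin
          set t := lam j / c j with ht
          have ht0 : 0 ≤ t := div_nonneg (hlam j) hjmem.le
          refine ⟨j, fun i => lam i - t * c i, ?_, ?_, ?_⟩
          · intro i
            show 0 ≤ lam i - t * c i
            by_cases hci : 0 < c i
            · have := hjmin i hci
              have : t * c i ≤ lam i := by
                rw [ht]
                calc lam j / c j * c i ≤ lam i / c i * c i := by
                      exact mul_le_mul_of_nonneg_right (hjmin i hci) hci.le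
                  _ = lam i := div_mul_cancel₀ _ hci.ne'
              linarith
            · push_neg at hci
              have : t * c i ≤ 0 := mul_nonpos_of_nonneg_of_nonpos ht0 hci
              have := hlam i
              linarith
          · simp [ht, div_mul_cancel₀, hjmem.ne']
          · rw [hx]
            have : ∑ i, (lam i - t * c i) • a i
                = (∑ i, lam i • a i) - t • ∑ i, c i • a i := by
              rw [Finset.smul_sum, ← Finset.sum_sub_distrib]
              congr 1; funext i; rw [sub_smul, smul_smul]
            rw [this, hc, smul_zero, sub_zero]
        -- x is in the cone iff it's in some subfamily cone
        have hcover : {x : E | ∃ lam : Fin (n+1) → ℝ, (∀ i, 0 ≤ lam i) ∧ x = ∑ i, lam i • a i}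
            = ⋃ j : Fin (n+1), {x : E | ∃ lam : Fin n → ℝ, (∀ i, 0 ≤ lam i) ∧
                x = ∑ i, lam i • a (j.succAbove i)} := by
          ext x
          simp only [Set.mem_setOf_eq, Set.mem_iUnion]
          constructor
          · rintro ⟨lam, hlam, hx⟩
            have hgsum : ∑ i, g i • a i = 0 := hg0
            have hex : (∃ j, 0 < g j) ∨ (∃ j, 0 < (-g) j) := by
              rcases lt_trichotomy (g i₀) 0 with h | h | h
              · right; exact ⟨i₀, by simpa using h⟩
              · exact absurd h hgi₀
              · left; exact ⟨i₀, h⟩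
            have : ∃ j, ∃ mu : Fin (n+1) → ℝ, (∀ i, 0 ≤ mu i) ∧ mu j = 0 ∧
                x = ∑ i, mu i • a i := by
              rcases hex with h | h
              · exact key g hgsum h x lam hlam hx
              · refine key (-g) ?_ h x lam hlam hx
                simp only [Pi.neg_apply, neg_smul, Finset.sum_neg_distrib, hgsum, neg_zero]
            obtain ⟨j, mu, hmu, hmuj, hxmu⟩ := this
            refine ⟨j, fun i => mu (j.succAbove i), fun i => hmu _, ?_⟩
            rw [hxmu, Fin.sum_univ_succAbove (fun i => mu i • a i) j, hmuj, zero_smul, zero_add]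
          · rintro ⟨j, lam, hlam, hx⟩
            refine ⟨fun i => if h : ∃ k, j.succAbove k = i then lam h.choose else 0, ?_, ?_⟩
            · intro i
              by_cases h : ∃ k, j.succAbove k = i
              · simp only [h, dif_pos]; exact hlam _
              · simp [h]
            · rw [hx, Fin.sum_univ_succAbove
                (fun i => (if h : ∃ k, j.succAbove k = i then lam h.choose else 0) • a i) j]
              have hj : ¬ ∃ k, j.succAbove k = j := by
                rintro ⟨k, hk⟩; exact Fin.succAbove_ne j k hk
              rw [dif_neg hj, zero_smul, zero_add]
              congr 1
              funext i
              have h : ∃ k, j.succAbove k = j.succAbove i := ⟨i, rfl⟩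
              rw [dif_pos h]
              have : h.choose = i := Fin.succAbove_right_injective h.choose_spec
              rw [this]
        rw [hcover]
        exact isClosed_iUnion_of_finite fun j => ih (fun i => a (j.succAbove i))


/-- Boundedness of a feasible linear program: if `P = {x : ∀ i, ⟪a i, x⟫ ≤ b i}` is
nonempty, then `⟪z, ·⟫` is bounded above on `P` iff `z` is a nonnegative linear combination
of the constraint vectors `a 1, …, a n`. -/
theorem lp_bounded_iff_mem_cone (d n : ℕ)
    (a : Fin n → EuclideanSpace ℝ (Fin d)) (b : Fin n → ℝ) (z : EuclideanSpace ℝ (Fin d))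
    (hfeas : ∃ x : EuclideanSpace ℝ (Fin d), ∀ i, ⟪a i, x⟫ ≤ b i) :
    (∃ c : ℝ, ∀ x : EuclideanSpace ℝ (Fin d), (∀ i, ⟪a i, x⟫ ≤ b i) → ⟪z, x⟫ ≤ c) ↔
      (∃ lam : Fin n → ℝ, (∀ i, 0 ≤ lam i) ∧ z = ∑ i, lam i • a i) := by
  constructor
  · rintro ⟨c, hc⟩
    by_contra hz
    -- the conic hull as a convex cone
    set S : Set (EuclideanSpace ℝ (Fin d)) :=
      {x | ∃ lam : Fin n → ℝ, (∀ i, 0 ≤ lam i) ∧ x = ∑ i, lam i • a i} with hS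
    have hSclosed : IsClosed S := isClosed_conicHull n a
    set K : ConvexCone ℝ (EuclideanSpace ℝ (Fin d)) :=
      { carrier := S
        smul_mem' := by
          rintro t ht x ⟨lam, hlam, hx⟩
          exact ⟨fun i => t * lam i, fun i => mul_nonneg ht.le (hlam i), by
            rw [hx, Finset.smul_sum]; congr 1; funext i; rw [smul_smul]⟩
        add_mem' := by
          rintro x ⟨lam, hlam, hx⟩ y ⟨mu, hmu, hy⟩
          exact ⟨fun i => lam i + mu i, fun i => add_nonneg (hlam i) (hmu i), by
            rw [hx, hy, ← Finset.sum_add_distrib]; congr 1; funext i; rw [add_smul]⟩ } with hK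
    have hne : (K : Set (EuclideanSpace ℝ (Fin d))).Nonempty :=
      ⟨0, ⟨fun _ => 0, fun i => le_refl 0, by simp⟩⟩
    have hzK : z ∉ K := hz
    obtain ⟨y, hy1, hy2⟩ :=
      (by
        obtain ⟨y, h1, h2⟩ := ProperCone.hyperplane_separation' (x₀ := z)
          (C := { carrier := S
                  add_mem' := fun hx hy => K.add_mem' hx hy
                  zero_mem' := ⟨fun _ => 0, fun i => le_refl 0, by simp⟩
                  smul_mem' := by
                    rintro ⟨t, ht⟩ x ⟨lam, hlam, hx⟩
                    change t • x ∈ S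
                    exact ⟨fun i => t * lam i, fun i => mul_nonneg ht (hlam i), by
                      rw [hx, Finset.smul_sum]; congr 1; funext i; rw [smul_smul]⟩
                  isClosed' := hSclosed }) (fun h => hzK h)
        exact ⟨y, h1, by rw [real_inner_comm]; exact h2⟩ :
        ∃ y, (∀ x ∈ S, 0 ≤ ⟪x, y⟫) ∧ ⟪y, z⟫ < 0)
    have hay : ∀ i, 0 ≤ ⟪a i, y⟫ := by
      intro i
      refine hy1 (a i) ⟨Pi.single i 1, ?_, ?_⟩
      · intro j
        rcases eq_or_ne j i with rfl | h
        · simp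
        · simp [Pi.single_apply, h]
      · simp [Pi.single_apply, ite_smul]
    obtain ⟨x₀, hx₀⟩ := hfeas
    have hzy : ⟪z, y⟫ < 0 := by rw [real_inner_comm]; exact hy2
    set s : ℝ := -⟪z, y⟫ with hs
    have hs0 : 0 < s := by rw [hs]; linarith
    set t : ℝ := max 0 ((c + 1 - ⟪z, x₀⟫) / s) with htdef
    have ht0 : 0 ≤ t := le_max_left _ _
    have hfeas' : ∀ i, ⟪a i, x₀ - t • y⟫ ≤ b i := by
      intro i
      rw [inner_sub_right, inner_smul_right]
      have := mul_nonneg ht0 (hay i)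
      have := hx₀ i
      linarith
    have hle := hc _ hfeas'
    rw [inner_sub_right, inner_smul_right] at hle
    have htge : (c + 1 - ⟪z, x₀⟫) / s ≤ t := le_max_right _ _
    rw [div_le_iff₀ hs0] at htge
    nlinarith
  · rintro ⟨lam, hlam, hz⟩
    refine ⟨∑ i, lam i * b i, fun x hx => ?_⟩
    rw [hz, sum_inner]
    refine Finset.sum_le_sum fun i _ => ?_
    rw [real_inner_smul_left]
    exact mul_le_mul_of_nonneg_left (hx i) (hlam i)
end

section
/- Let b_1, …, b_N ∈ ℝ² with ‖b_i‖ ≤ 1 for all i, and let K = conv{b_1, …, b_N}. Let o_1, o_2, o_3 ∈ ℝ² satisfy o_1 + o_2 + o_3 = 0 and ‖o_1‖ = ‖o_2‖ = ‖o_3‖ = 4 (the vertices of an equilateral triangle centered at the origin of circumradius 4). Suppose b_k ≠ b_m and the segment [b_k, b_m] is an edge of K. Then there exists i ∈ {1,2,3} such that [b_k, b_m] is an edge of conv({o_i} ∪ {b_1, …, b_N}) and the distance from o_i to the affine line through b_k and b_m is at least 1. -/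
open RealInnerProductSpace

/-- `F` is an edge of the convex set `K ⊆ ℝ²`: a one-dimensional exposed face, i.e. the set
of maximizers of some linear functional `⟪u, ·⟫` over `K`, whose affine span is
one-dimensional. -/
def IsEdge (K F : Set (EuclideanSpace ℝ (Fin 2))) : Prop :=
  (∃ u : EuclideanSpace ℝ (Fin 2),
      F = {x ∈ K | ∀ y ∈ K, ⟪u, y⟫ ≤ ⟪u, x⟫}) ∧
    Module.finrank ℝ (affineSpan ℝ F).direction = 1

lemma lemA (a0 a1 a2 : ℝ) (hs : a0 + a1 + a2 = 0) (hq : a0^2 + a1^2 + a2^2 = 24) :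
    a0 ≤ -2 ∨ a1 ≤ -2 ∨ a2 ≤ -2 := by
  by_contra h
  push_neg at h
  obtain ⟨h0, h1, h2⟩ := h
  have g0 : (0:ℝ) < a0 + 2 := by linarith
  have g1 : (0:ℝ) < a1 + 2 := by linarith
  have g2 : (0:ℝ) < a2 + 2 := by linarith
  have f0 : (0:ℝ) < 4 - a0 := by linarith
  have f1 : (0:ℝ) < 4 - a1 := by linarith
  have f2 : (0:ℝ) < 4 - a2 := by linarith
  nlinarith [mul_pos (mul_pos g0 g1) g2, mul_pos (mul_pos f0 f1) f2]

lemma lemB (a1 b1 a2 b2 n0 n1 : ℝ) (h1 : a1^2 + b1^2 = 16) (h2 : a2^2 + b2^2 = 16)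
    (h3 : a1*a2 + b1*b2 = -8) (hn : n0^2 + n1^2 = 1) :
    (n0*(-a1 - a2) + n1*(-b1 - b2))^2 + (n0*a1 + n1*b1)^2 + (n0*a2 + n1*b2)^2 = 24 := by
  have e1 : a1^2 + a2^2 + a1*a2 = 12 := by
    linear_combination (b2^2/16) * h1 + ((16 - a1^2)/16) * h2 + ((8 + a1*a2 - b1*b2)/16) * h3
  have e2 : b1^2 + b2^2 + b1*b2 = 12 := by
    linear_combination (a2^2/16) * h1 + ((16 - b1^2)/16) * h2 + ((8 + b1*b2 - a1*a2)/16) * h3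
  have e3 : 2*(a1*b1 + a2*b2) + a1*b2 + a2*b1 = 0 := by
    linear_combination (-(a2*b2)/8) * h1 + (-(a1*b1)/8) * h2 + ((a1*b2 + a2*b1)/8) * h3
  linear_combination (2*n0^2) * e1 + (2*n1^2) * e2 + (2*n0*n1) * e3 + 24 * hn

/-- Three viewpoints: if `[b k, b m]` is an edge of `K = conv{b_1, …, b_N}` with all
`‖b i‖ ≤ 1`, and `o 0, o 1, o 2` are the vertices of an equilateral triangle centered at
the origin of circumradius `4`, then for some `i` the segment `[b k, b m]` is an edge of
`conv({o i} ∪ {b_1, …, b_N})` and the distance from `o i` to the line through `b k, b m`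
is at least `1`. -/
theorem three_viewpoints (N : ℕ) (b : Fin N → EuclideanSpace ℝ (Fin 2))
    (hb : ∀ i, ‖b i‖ ≤ 1)
    (o : Fin 3 → EuclideanSpace ℝ (Fin 2))
    (hsum : o 0 + o 1 + o 2 = 0) (hno : ∀ i, ‖o i‖ = 4)
    (k m : Fin N) (hkm : b k ≠ b m)
    (hedge : IsEdge (convexHull ℝ (Set.range b)) (segment ℝ (b k) (b m))) :
    ∃ i : Fin 3,
      IsEdge (convexHull ℝ (insert (o i) (Set.range b))) (segment ℝ (b k) (b m)) ∧
      1 ≤ Metric.infDist (o i)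
        (affineSpan ℝ {b k, b m} : Set (EuclideanSpace ℝ (Fin 2))) := by
  classical
  obtain ⟨⟨u, hF⟩, hdim⟩ := hedge
  set K : Set (EuclideanSpace ℝ (Fin 2)) := convexHull ℝ (Set.range b) with hKdef
  -- coordinate helpers
  have inner_coord : ∀ x y : EuclideanSpace ℝ (Fin 2), ⟪x, y⟫ = x 0 * y 0 + x 1 * y 1 := by
    intro x y
    simp [PiLp.inner_apply, RCLike.inner_apply, Fin.sum_univ_two]
    ring
  have normsq : ∀ x : EuclideanSpace ℝ (Fin 2), x 0 ^ 2 + x 1 ^ 2 = ‖x‖ ^ 2 := by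
    intro x
    have := real_inner_self_eq_norm_sq x
    rw [inner_coord] at this
    nlinarith [this]
  have hkK : b k ∈ K := subset_convexHull ℝ _ ⟨k, rfl⟩
  -- obtain a unit normal n with the face property
  obtain ⟨n, hn1, hfaceK⟩ : ∃ n : EuclideanSpace ℝ (Fin 2), ‖n‖ = 1 ∧
      segment ℝ (b k) (b m) = {x ∈ K | ∀ y ∈ K, ⟪n, y⟫ ≤ ⟪n, x⟫} := by
    by_cases hu : u = 0
    · -- degenerate case : K is the segment itself
      have hKseg : K = segment ℝ (b k) (b m) := by
        rw [hF, hu]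
        ext x
        simp
      set d : EuclideanSpace ℝ (Fin 2) := b m - b k with hd
      have hdne : d ≠ 0 := sub_ne_zero.mpr (Ne.symm hkm)
      set v : EuclideanSpace ℝ (Fin 2) := (WithLp.equiv 2 (Fin 2 → ℝ)).symm ![d 1, -d 0]
        with hv
      have hv0 : v 0 = d 1 := rfl
      have hv1 : v 1 = -d 0 := rfl
      have hvne : v ≠ 0 := by
        intro hz
        apply hdne
        have h0 : v 0 = 0 := by rw [hz]; rfl
        have h1 : v 1 = 0 := by rw [hz]; rfl
        rw [hv0] at h0; rw [hv1] at h1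
        ext i
        fin_cases i
        · simpa using h1
        · simpa using h0
      refine ⟨‖v‖⁻¹ • v, ?_, ?_⟩
      · exact norm_smul_inv_norm (𝕜 := ℝ) hvne
      · have hvd : ⟪v, d⟫ = 0 := by
          rw [inner_coord, hv0, hv1]; ring
        have hnd : ⟪‖v‖⁻¹ • v, d⟫ = 0 := by
          rw [real_inner_smul_left, hvd]; ring
        have hconst : ∀ x ∈ segment ℝ (b k) (b m),
            ⟪‖v‖⁻¹ • v, x⟫ = ⟪‖v‖⁻¹ • v, b k⟫ := by
          intro x hx
          obtain ⟨s, t, hs, ht, hst, rfl⟩ := hx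
          have hbm : ⟪‖v‖⁻¹ • v, b m⟫ = ⟪‖v‖⁻¹ • v, b k⟫ := by
            have : ⟪‖v‖⁻¹ • v, b m - b k⟫ = 0 := hnd
            rw [inner_sub_right] at this
            linarith
          rw [inner_add_right, real_inner_smul_right, real_inner_smul_right]
          linear_combination t * hbm + (⟪‖v‖⁻¹ • v, b k⟫) * hst
        ext x
        constructor
        · intro hx
          refine ⟨by rw [hKseg]; exact hx, ?_⟩
          intro y hy
          rw [hconst x hx, hconst y (by rwa [hKseg] at hy)]
        · rintro ⟨hxK, -⟩
          rwa [hKseg] at hxK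
    · -- generic case : normalize u
      refine ⟨‖u‖⁻¹ • u, norm_smul_inv_norm (𝕜 := ℝ) hu, ?_⟩
      rw [hF]
      have hupos : (0:ℝ) < ‖u‖⁻¹ := inv_pos.mpr (norm_pos_iff.mpr hu)
      ext x
      simp only [Set.mem_setOf_eq]
      constructor
      · rintro ⟨hxK, hmax⟩
        exact ⟨hxK, fun y hy => by
          rw [real_inner_smul_left, real_inner_smul_left]
          exact mul_le_mul_of_nonneg_left (hmax y hy) hupos.le⟩
      · rintro ⟨hxK, hmax⟩
        refine ⟨hxK, fun y hy => ?_⟩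
        have := hmax y hy
        rw [real_inner_smul_left, real_inner_smul_left] at this
        exact le_of_mul_le_mul_left this hupos
  -- basic consequences of the face property
  have hbkF : b k ∈ segment ℝ (b k) (b m) := left_mem_segment ℝ _ _
  have hbmF : b m ∈ segment ℝ (b k) (b m) := right_mem_segment ℝ _ _
  have hc : ∀ y ∈ K, ⟪n, y⟫ ≤ ⟪n, b k⟫ := by
    have := hbkF
    rw [hfaceK] at this
    exact this.2
  have hmaxval : ∀ x ∈ segment ℝ (b k) (b m), ⟪n, x⟫ = ⟪n, b k⟫ := by
    intro x hx
    rw [hfaceK] at hx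
    exact le_antisymm (hc x hx.1) (hx.2 (b k) hkK)
  have hcm : ⟪n, b m⟫ = ⟪n, b k⟫ := hmaxval _ hbmF
  have hcge : (-1 : ℝ) ≤ ⟪n, b k⟫ := by
    have h := abs_real_inner_le_norm n (b k)
    have : |⟪n, b k⟫| ≤ 1 := by
      calc |⟪n, b k⟫| ≤ ‖n‖ * ‖b k‖ := h
        _ ≤ 1 * 1 := by rw [hn1]; exact mul_le_mul_of_nonneg_left (hb k) zero_le_one
        _ = 1 := by ring
    cases abs_le.mp this with
    | intro h1 h2 => linarith
  -- choose the viewpoint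
  have hn2 : n 0 ^ 2 + n 1 ^ 2 = 1 := by rw [normsq, hn1]; norm_num
  have ho16 : ∀ i : Fin 3, (o i 0) ^ 2 + (o i 1) ^ 2 = 16 := by
    intro i
    rw [normsq, hno i]; norm_num
  have ho0 : ∀ j, o 0 j = -(o 1 j) - o 2 j := by
    intro j
    have h := congrFun (congrArg (fun (x : EuclideanSpace ℝ (Fin 2)) (j : Fin 2) => x j) hsum) j
    simp only [PiLp.add_apply, PiLp.zero_apply] at h
    linarith
  have h3 : o 1 0 * o 2 0 + o 1 1 * o 2 1 = -8 := by
    have h0 := ho16 0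
    rw [ho0 0, ho0 1] at h0
    have h1 := ho16 1
    have h2 := ho16 2
    linear_combination (h0 - h1 - h2) / 2
  have hsquares : ⟪n, o 0⟫ ^ 2 + ⟪n, o 1⟫ ^ 2 + ⟪n, o 2⟫ ^ 2 = 24 := by
    have e := lemB (o 1 0) (o 1 1) (o 2 0) (o 2 1) (n 0) (n 1) (ho16 1) (ho16 2) h3 hn2
    rw [inner_coord, inner_coord, inner_coord, ho0 0, ho0 1]
    linear_combination e
  have hsum3 : ⟪n, o 0⟫ + ⟪n, o 1⟫ + ⟪n, o 2⟫ = 0 := by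
    rw [← inner_add_right, ← inner_add_right, hsum, inner_zero_right]
  obtain ⟨i, hi⟩ : ∃ i : Fin 3, ⟪n, o i⟫ ≤ -2 := by
    rcases lemA _ _ _ hsum3 hsquares with h | h | h
    · exact ⟨0, h⟩
    · exact ⟨1, h⟩
    · exact ⟨2, h⟩
  refine ⟨i, ?_, ?_⟩
  · -- edge of the enlarged hull
    set K' : Set (EuclideanSpace ℝ (Fin 2)) := convexHull ℝ (insert (o i) (Set.range b))
      with hK'def
    have hKsub : K ⊆ K' := convexHull_mono (Set.subset_insert _ _)
    have hK'join : K' = convexJoin ℝ {o i} K :=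
      convexHull_insert ⟨b k, Set.mem_range_self k⟩
    have hK'le : ∀ y ∈ K', ⟪n, y⟫ ≤ ⟪n, b k⟫ := by
      intro y hy
      rw [hK'join, mem_convexJoin] at hy
      obtain ⟨a, ha, z, hz, hyz⟩ := hy
      rw [Set.mem_singleton_iff] at ha
      subst ha
      obtain ⟨s, t, hs, ht, hst, rfl⟩ := hyz
      rw [inner_add_right, real_inner_smul_right, real_inner_smul_right]
      have h1 : s * ⟪n, o i⟫ ≤ s * ⟪n, b k⟫ :=
        mul_le_mul_of_nonneg_left (by linarith) hs
      have h2 : t * ⟪n, z⟫ ≤ t * ⟪n, b k⟫ :=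
        mul_le_mul_of_nonneg_left (hc z hz) ht
      nlinarith [h1, h2]
    constructor
    · refine ⟨n, ?_⟩
      ext x
      simp only [Set.mem_setOf_eq]
      constructor
      · intro hx
        have hxK : x ∈ K := by rw [hfaceK] at hx; exact hx.1
        refine ⟨hKsub hxK, ?_⟩
        intro y hy
        rw [hmaxval x hx]
        exact hK'le y hy
      · rintro ⟨hxK', hxmax⟩
        have hcle : ⟪n, b k⟫ ≤ ⟪n, x⟫ := hxmax (b k) (hKsub hkK)
        have hxK : x ∈ K := by
          rw [hK'join, mem_convexJoin] at hxK'
          obtain ⟨a, ha, z, hz, hxz⟩ := hxK'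
          rw [Set.mem_singleton_iff] at ha
          subst ha
          obtain ⟨s, t, hs, ht, hst, rfl⟩ := hxz
          have hinner : ⟪n, s • o i + t • z⟫ = s * ⟪n, o i⟫ + t * ⟪n, z⟫ := by
            rw [inner_add_right, real_inner_smul_right, real_inner_smul_right]
          have hs0 : s = 0 := by
            by_contra hsne
            have hspos : 0 < s := lt_of_le_of_ne hs (Ne.symm hsne)
            have hz' := hc z hz
            nlinarith [hcle, hinner, hi, hcge, hz', hspos]
          have ht1 : t = 1 := by linarith
          rw [hs0, ht1, zero_smul, one_smul, zero_add]
          exact hz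
        rw [hfaceK]
        exact ⟨hxK, fun y hy => hxmax y (hKsub hy)⟩
    · exact hdim
  · -- distance estimate
    have hspan : ∀ q ∈ (affineSpan ℝ {b k, b m} : Set (EuclideanSpace ℝ (Fin 2))),
        ⟪n, q⟫ = ⟪n, b k⟫ := by
      intro q hq
      have hbk : b k ∈ affineSpan ℝ ({b k, b m} : Set (EuclideanSpace ℝ (Fin 2))) :=
        left_mem_affineSpan_pair ℝ _ _
      have hdir : q - b k ∈ (affineSpan ℝ ({b k, b m} :
          Set (EuclideanSpace ℝ (Fin 2)))).direction := by
        simpa using AffineSubspace.vsub_mem_direction hq hbk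
      rw [direction_affineSpan, mem_vectorSpan_pair] at hdir
      obtain ⟨r, hr⟩ := hdir
      have : ⟪n, q - b k⟫ = 0 := by
        rw [← hr, real_inner_smul_right]
        have : ⟪n, b k - b m⟫ = 0 := by
          rw [inner_sub_right, hcm]; ring
        simp only [vsub_eq_sub] at *
        rw [this]; ring
      rw [inner_sub_right] at this
      linarith
    by_contra hlt
    push_neg at hlt
    have hne : (affineSpan ℝ ({b k, b m} : Set (EuclideanSpace ℝ (Fin 2)) ) :
        Set (EuclideanSpace ℝ (Fin 2))).Nonempty :=
      ⟨b k, left_mem_affineSpan_pair ℝ _ _⟩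
    rw [Metric.infDist_lt_iff hne] at hlt
    obtain ⟨q, hq, hdq⟩ := hlt
    have h1 : (1:ℝ) ≤ ⟪n, q - o i⟫ := by
      rw [inner_sub_right, hspan q hq]
      linarith
    have h2 : ⟪n, q - o i⟫ ≤ ‖q - o i‖ := by
      have := real_inner_le_norm n (q - o i)
      rwa [hn1, one_mul] at this
    have : dist (o i) q = ‖q - o i‖ := by
      rw [dist_eq_norm, norm_sub_rev]
    linarith
end

section
/- Let L ⊆ ℝ² be an affine line with dist(0, L) ≥ 1, and let x_1, x_2 ∈ L with ‖x_1‖ ≤ 10 and ‖x_2‖ ≤ 10. Then (1/101)·‖x_1 − x_2‖ ≤ ang(x_1, x_2) ≤ ‖x_1 − x_2‖, where ang(x,y) = arccos(|⟨x,y⟩| / (‖x‖·‖y‖)). -/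
open RealInnerProductSpace

set_option maxHeartbeats 1000000

lemma arctan_lip (a b : ℝ) : |Real.arctan a - Real.arctan b| ≤ |a - b| := by
  have h : LipschitzWith 1 Real.arctan := by
    apply lipschitzWith_of_nnnorm_deriv_le Real.differentiable_arctan
    intro x
    rw [Real.deriv_arctan, ← NNReal.coe_le_coe, coe_nnnorm, Real.norm_eq_abs, NNReal.coe_one]
    rw [abs_of_nonneg (by positivity)]
    rw [div_le_one (by positivity)]
    nlinarith [sq_nonneg x]
  simpa [Real.dist_eq] using h.dist_le_mul a b

lemma core_ineq (d s t : ℝ) (hd : 1 ≤ d) (hst : s ≤ t)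
    (hs10 : Real.sqrt (d^2+s^2) ≤ 10) (ht10 : Real.sqrt (d^2+t^2) ≤ 10) :
    (1/101) * (t - s) ≤ Real.arccos (|d^2+s*t| / (Real.sqrt (d^2+s^2) * Real.sqrt (d^2+t^2))) ∧
    Real.arccos (|d^2+s*t| / (Real.sqrt (d^2+s^2) * Real.sqrt (d^2+t^2))) ≤ t - s := by
  have hd0 : (0:ℝ) < d := lt_of_lt_of_le one_pos hd
  have hs0 : (0:ℝ) < d^2+s^2 := by positivity
  have ht0 : (0:ℝ) < d^2+t^2 := by positivity
  set a := Real.sqrt (d^2+s^2) with ha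
  set b := Real.sqrt (d^2+t^2) with hb
  have hsd : Real.sqrt (1+(s/d)^2) = a / d := by
    rw [show 1+(s/d)^2 = (d^2+s^2)/d^2 by field_simp, Real.sqrt_div hs0.le,
      Real.sqrt_sq hd0.le]
  have htd : Real.sqrt (1+(t/d)^2) = b / d := by
    rw [show 1+(t/d)^2 = (d^2+t^2)/d^2 by field_simp, Real.sqrt_div ht0.le,
      Real.sqrt_sq hd0.le]
  have ha0 : 0 < a := Real.sqrt_pos.mpr hs0
  have hb0 : 0 < b := Real.sqrt_pos.mpr ht0
  have ha2 : a^2 = d^2+s^2 := Real.sq_sqrt hs0.le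
  have hb2 : b^2 = d^2+t^2 := Real.sq_sqrt ht0.le
  clear ha hb
  clear_value a b
  have hN0 : 0 < a*b := mul_pos ha0 hb0
  have hab100 : a*b ≤ 100 := by nlinarith
  have hkey : (a*b)^2 = (d^2+s*t)^2 + d^2*(t-s)^2 := by rw [mul_pow, ha2, hb2]; ring
  have hcos : Real.cos (Real.arctan (t/d) - Real.arctan (s/d)) = (d^2+s*t)/(a*b) := by
    rw [Real.cos_sub, Real.cos_arctan, Real.sin_arctan, Real.cos_arctan, Real.sin_arctan,
      hsd, htd]
    field_simp
  set w := Real.arctan (t/d) - Real.arctan (s/d) with hw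
  have hw0 : 0 ≤ w :=
    sub_nonneg.2 (Real.arctan_strictMono.monotone (by gcongr))
  have hwpi : w ≤ Real.pi := by
    have h1 := Real.arctan_lt_pi_div_two (t/d)
    have h2 := Real.neg_pi_div_two_lt_arctan (s/d)
    have h3 := Real.pi_pos
    have : w < Real.pi := by rw [hw]; linarith
    linarith
  have harc : Real.arccos ((d^2+s*t)/(a*b)) = w := by
    rw [← hcos, Real.arccos_cos hw0 hwpi]
  have hanti : ∀ x y : ℝ, x ≤ y → Real.arccos y ≤ Real.arccos x := by
    intro x y h
    rw [Real.arccos_eq_pi_div_two_sub_arcsin, Real.arccos_eq_pi_div_two_sub_arcsin]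
    have := Real.monotone_arcsin h
    linarith
  constructor
  · -- lower bound
    have hsin : Real.sin (Real.arccos (|d^2+s*t|/(a*b))) = d*(t-s)/(a*b) := by
      rw [Real.sin_arccos]
      have h1 : 1 - (|d^2+s*t|/(a*b))^2 = (d*(t-s)/(a*b))^2 := by
        rw [div_pow, div_pow, sq_abs]
        field_simp
        nlinarith [hkey]
      rw [h1, Real.sqrt_sq (div_nonneg (mul_nonneg hd0.le (sub_nonneg.2 hst)) hN0.le)]
    have hθ : d*(t-s)/(a*b) ≤ Real.arccos (|d^2+s*t|/(a*b)) := by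
      rw [← hsin]
      exact Real.sin_le (Real.arccos_nonneg _)
    refine le_trans ?_ hθ
    have hts : 0 ≤ t - s := sub_nonneg.2 hst
    rw [le_div_iff₀ hN0]
    have c1 : 1/101*(t-s)*(a*b) ≤ 1/101*(t-s)*100 :=
      mul_le_mul_of_nonneg_left hab100 (by linarith : (0:ℝ) ≤ 1/101*(t-s))
    have c2 : t - s ≤ d*(t-s) := by nlinarith [mul_le_mul_of_nonneg_right hd hts]
    linarith
  · -- upper bound
    have h1 : Real.arccos (|d^2+s*t|/(a*b)) ≤ Real.arccos ((d^2+s*t)/(a*b)) := by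
      apply hanti
      gcongr
      exact le_abs_self _
    rw [harc] at h1
    refine h1.trans (le_trans ?_ (div_le_self (sub_nonneg.2 hst) hd))
    calc w ≤ |Real.arctan (t/d) - Real.arctan (s/d)| := le_abs_self _
      _ ≤ |t/d - s/d| := arctan_lip _ _
      _ = (t-s)/d := by rw [abs_of_nonneg (sub_nonneg.2 (by gcongr : s/d ≤ t/d))]; ring

lemma decomp_inner {E : Type*} [NormedAddCommGroup E] [InnerProductSpace ℝ E]
    (p u : E) (hu : ‖u‖ = 1) (hpu : ⟪p, u⟫ = 0) (s t : ℝ) :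
    ⟪p + s • u, p + t • u⟫ = ‖p‖^2 + s * t := by
  have huu : ⟪u, u⟫ = 1 := by rw [real_inner_self_eq_norm_sq, hu]; norm_num
  have hup : ⟪u, p⟫ = 0 := by rw [real_inner_comm]; exact hpu
  rw [inner_add_left, inner_add_right, inner_add_right,
    real_inner_smul_left, real_inner_smul_left, real_inner_smul_right,
    real_inner_smul_right, huu, hup, hpu, real_inner_self_eq_norm_sq]
  ring

lemma decomp_norm {E : Type*} [NormedAddCommGroup E] [InnerProductSpace ℝ E]
    (p u : E) (hu : ‖u‖ = 1) (hpu : ⟪p, u⟫ = 0) (r : ℝ) :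
    ‖p + r • u‖ = Real.sqrt (‖p‖^2 + r^2) := by
  rw [← Real.sqrt_sq (norm_nonneg (p + r • u))]
  congr 1
  rw [norm_add_sq_real, real_inner_smul_right, hpu, norm_smul, hu]
  simp [sq_abs]

/-- Angular and Euclidean distances: if `L` is an affine line in `ℝ²` at distance at least
`1` from the origin, then for any `x₁, x₂ ∈ L` of norm at most `10`,
`(1/101) ‖x₁ − x₂‖ ≤ ang(x₁, x₂) ≤ ‖x₁ − x₂‖`, where
`ang(x, y) = arccos(|⟪x, y⟫| / (‖x‖ ‖y‖))`. -/
theorem angular_euclidean_distance (L : AffineSubspace ℝ (EuclideanSpace ℝ (Fin 2)))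
    (hL : Module.finrank ℝ L.direction = 1)
    (hdist : 1 ≤ Metric.infDist (0 : EuclideanSpace ℝ (Fin 2))
      (L : Set (EuclideanSpace ℝ (Fin 2))))
    (x₁ x₂ : EuclideanSpace ℝ (Fin 2)) (h₁ : x₁ ∈ L) (h₂ : x₂ ∈ L)
    (hn₁ : ‖x₁‖ ≤ 10) (hn₂ : ‖x₂‖ ≤ 10) :
    (1 / 101) * ‖x₁ - x₂‖ ≤ Real.arccos (|⟪x₁, x₂⟫| / (‖x₁‖ * ‖x₂‖)) ∧
      Real.arccos (|⟪x₁, x₂⟫| / (‖x₁‖ * ‖x₂‖)) ≤ ‖x₁ - x₂‖ := by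
  by_cases hx : x₂ = x₁
  · subst hx
    have h1 : (1:ℝ) ≤ ‖x₂‖ := by
      have := Metric.infDist_le_dist_of_mem (x := (0 : EuclideanSpace ℝ (Fin 2))) h₂
      rw [dist_zero_left] at this
      linarith
    have h0 : ‖x₂‖ ≠ 0 := by positivity
    have : |⟪x₂, x₂⟫| / (‖x₂‖ * ‖x₂‖) = 1 := by
      rw [real_inner_self_eq_norm_mul_norm, abs_of_nonneg (by positivity)]
      field_simp
    rw [this, Real.arccos_one, sub_self, norm_zero]
    norm_num
  · have hv : x₂ - x₁ ≠ 0 := sub_ne_zero.2 hx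
    set v : EuclideanSpace ℝ (Fin 2) := x₂ - x₁ with hvdef
    set u : EuclideanSpace ℝ (Fin 2) := ‖v‖⁻¹ • v with hudef
    have hu : ‖u‖ = 1 := norm_smul_inv_norm hv
    set s : ℝ := ⟪x₁, u⟫ with hsdef
    set p : EuclideanSpace ℝ (Fin 2) := x₁ - s • u with hpdef
    have hpL : p ∈ L := by
      have hp : p = (-(s * ‖v‖⁻¹)) • (x₂ -ᵥ x₁) +ᵥ x₁ := by
        rw [hpdef, hudef, vsub_eq_sub, vadd_eq_add, ← hvdef, smul_smul]
        module
      rw [hp]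
      exact AffineSubspace.smul_vsub_vadd_mem L _ h₂ h₁ h₁
    have hd1 : (1:ℝ) ≤ ‖p‖ := by
      have := Metric.infDist_le_dist_of_mem (x := (0 : EuclideanSpace ℝ (Fin 2))) hpL
      rw [dist_zero_left] at this
      linarith
    have huu : ⟪u, u⟫ = 1 := by
      rw [real_inner_self_eq_norm_sq, hu]; norm_num
    have hpu : ⟪p, u⟫ = 0 := by
      rw [hpdef, inner_sub_left, real_inner_smul_left, huu, ← hsdef]
      ring
    set t : ℝ := s + ‖v‖ with htdef
    have hst : s < t := by
      have : 0 < ‖v‖ := norm_pos_iff.2 hv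
      rw [htdef]; linarith
    have hx1 : x₁ = p + s • u := by rw [hpdef]; abel
    have hx2 : x₂ = p + t • u := by
      have hvu : ‖v‖ • u = v := by
        rw [hudef, smul_smul, mul_inv_cancel₀ (norm_ne_zero_iff.2 hv), one_smul]
      have : x₂ = x₁ + v := by rw [hvdef]; abel
      rw [this, hx1, htdef, add_smul, hvu]
      abel
    have nsq : ∀ r : ℝ, ‖p + r • u‖ = Real.sqrt (‖p‖^2 + r^2) :=
      decomp_norm p u hu hpu
    have hinner : ⟪x₁, x₂⟫ = ‖p‖^2 + s * t := by
      rw [hx1, hx2]; exact decomp_inner p u hu hpu s t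
    have hdiff : ‖x₁ - x₂‖ = t - s := by
      have h : x₁ - x₂ = -v := by rw [hvdef]; abel
      rw [h, norm_neg, htdef]; ring
    have hn1' : ‖x₁‖ = Real.sqrt (‖p‖^2 + s^2) := by rw [hx1, nsq]
    have hn2' : ‖x₂‖ = Real.sqrt (‖p‖^2 + t^2) := by rw [hx2, nsq]
    rw [hdiff, hinner, hn1', hn2']
    exact core_ineq ‖p‖ s t hd1 hst.le (by rw [← hn1']; exact hn₁) (by rw [← hn2']; exact hn₂)
end

section
/- Let M > 0 and let a_1, …, a_n ∈ ℝ^d satisfy ‖a_i‖ ≤ M for i = 1, …, n. Let a_{n+1}, …, a_{n+d} ∈ ℝ^d be affinely independent, let H be their affine span (a hyperplane), and assume dist(0, H) ≥ M, so that there is a unique h ∈ ℝ^d with ⟨h, x⟩ = 1 for all x ∈ H. Let z_0 ≠ 0 be a nonnegative linear combination z_0 = ∑_{j=1}^{d} c_j a_{n+j} with c_j ≥ 0. Then: (1) ‖h‖ ≤ 1/M; (2) every point x of the polytope P⁺ = conv({0, a_1, …, a_{n+d}}) satisfies ⟨h, x⟩ ≤ 1; and (3) there exists t ≥ 0 with t·z_0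 ∈ conv{a_{n+1}, …, a_{n+d}}. Consequently the set {x ∈ P⁺ : ⟨h,x⟩ = 1} is an exposed face of P⁺ containing conv{a_{n+1},…,a_{n+d}}, and the ray of z_0 pierces it. -/
open RealInnerProductSpace

/-- Adding a facet: let `‖a i‖ ≤ M` for `i = 1, …, n`, let `v 1, …, v d` be affinely
independent points whose affine span `H` is at distance at least `M` from the origin, and
let `z₀ ≠ 0` be a nonnegative combination of the `v j`. Then there is a unique `h` with
`⟪h, x⟫ = 1` on `H`; it satisfies `‖h‖ ≤ 1/M`; every point of
`P⁺ = conv({0} ∪ {a i} ∪ {v j})` lies below `H`; some nonnegative multiple of `z₀` lies in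
`conv{v j}`; and `{x ∈ P⁺ : ⟪h, x⟫ = 1}` is an exposed face of `P⁺` containing
`conv{v j}`, pierced by the ray of `z₀`. -/
theorem adding_facet (d n : ℕ) (M : ℝ) (hM : 0 < M)
    (a : Fin n → EuclideanSpace ℝ (Fin d)) (ha : ∀ i, ‖a i‖ ≤ M)
    (v : Fin d → EuclideanSpace ℝ (Fin d)) (hv : AffineIndependent ℝ v)
    (hdist : M ≤ Metric.infDist (0 : EuclideanSpace ℝ (Fin d))
      (affineSpan ℝ (Set.range v) : Set (EuclideanSpace ℝ (Fin d))))
    (z₀ : EuclideanSpace ℝ (Fin d)) (hz₀ : z₀ ≠ 0)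
    (c : Fin d → ℝ) (hc : ∀ j, 0 ≤ c j) (hz₀c : z₀ = ∑ j, c j • v j) :
    ∃ h : EuclideanSpace ℝ (Fin d),
      (∀ x ∈ (affineSpan ℝ (Set.range v) : Set (EuclideanSpace ℝ (Fin d))), ⟪h, x⟫ = 1) ∧
      (∀ h' : EuclideanSpace ℝ (Fin d),
        (∀ x ∈ (affineSpan ℝ (Set.range v) : Set (EuclideanSpace ℝ (Fin d))), ⟪h', x⟫ = 1) →
        h' = h) ∧
      ‖h‖ ≤ 1 / M ∧
      (∀ x ∈ convexHull ℝ (insert 0 (Set.range a ∪ Set.range v)), ⟪h, x⟫ ≤ 1) ∧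
      (∃ t : ℝ, 0 ≤ t ∧ t • z₀ ∈ convexHull ℝ (Set.range v)) ∧
      IsExposed ℝ (convexHull ℝ (insert 0 (Set.range a ∪ Set.range v)))
        {x ∈ convexHull ℝ (insert 0 (Set.range a ∪ Set.range v)) | ⟪h, x⟫ = 1} ∧
      convexHull ℝ (Set.range v) ⊆
        {x ∈ convexHull ℝ (insert 0 (Set.range a ∪ Set.range v)) | ⟪h, x⟫ = 1} ∧
      (∃ t : ℝ, 0 ≤ t ∧
        t • z₀ ∈ {x ∈ convexHull ℝ (insert 0 (Set.range a ∪ Set.range v)) | ⟪h, x⟫ = 1}) := by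
  -- d ≥ 1
  have hd : 0 < d := by
    rcases Nat.eq_zero_or_pos d with h0 | h0
    · exfalso; apply hz₀; rw [hz₀c]; subst h0; simp
    · exact h0
  haveI : NeZero d := ⟨hd.ne'⟩
  haveI : Nonempty (affineSpan ℝ (Set.range v)) :=
    ⟨⟨v ⟨0, hd⟩, subset_affineSpan ℝ _ (Set.mem_range_self _)⟩⟩
  set H := affineSpan ℝ (Set.range v) with hH
  set p : EuclideanSpace ℝ (Fin d) :=
    (EuclideanGeometry.orthogonalProjection H (0 : EuclideanSpace ℝ (Fin d)) :
      EuclideanSpace ℝ (Fin d)) with hpdef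
  have hpH : p ∈ H := EuclideanGeometry.orthogonalProjection_mem 0
  have hpO : p ∈ H.directionᗮ := by
    have := EuclideanGeometry.orthogonalProjection_vsub_mem_direction_orthogonal H
      (0 : EuclideanSpace ℝ (Fin d))
    simpa using this
  have hpM : M ≤ ‖p‖ := by
    refine hdist.trans ?_
    have := Metric.infDist_le_dist_of_mem (x := (0 : EuclideanSpace ℝ (Fin d))) hpH
    simpa [dist_eq_norm] using this
  have hpn : (0:ℝ) < ‖p‖ := lt_of_lt_of_le hM hpM
  have hp0 : p ≠ 0 := by
    intro h; rw [h] at hpn; simp at hpn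
  set h : EuclideanSpace ℝ (Fin d) := (‖p‖^2)⁻¹ • p with hhdef
  have hnh : ‖h‖ = ‖p‖⁻¹ := by
    rw [hhdef, norm_smul, norm_inv, norm_pow, norm_norm, sq]
    field_simp
  -- h is 1 on H
  have key : ∀ x ∈ (H : Set (EuclideanSpace ℝ (Fin d))), ⟪h, x⟫ = 1 := by
    intro x hx
    have hmem : x - p ∈ H.direction := by
      have := AffineSubspace.vsub_mem_direction hx hpH
      simpa using this
    have horth : ⟪p, x - p⟫ = 0 := by
      have := (Submodule.mem_orthogonal _ p).mp hpO (x - p) hmem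
      rwa [real_inner_comm] at this
    have hpx : ⟪p, x⟫ = ‖p‖^2 := by
      rw [inner_sub_right, real_inner_self_eq_norm_sq] at horth
      linarith
    rw [hhdef, real_inner_smul_left, hpx]
    field_simp
  have hvH : ∀ j, v j ∈ (H : Set (EuclideanSpace ℝ (Fin d))) := fun j =>
    subset_affineSpan ℝ _ (Set.mem_range_self j)
  have hvone : ∀ j, ⟪h, v j⟫ = 1 := fun j => key _ (hvH j)
  -- norm bound
  have hnorm : ‖h‖ ≤ 1 / M := by
    rw [hnh, one_div]
    exact inv_anti₀ hM hpM
  -- span of range v is ⊤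
  have hspan : Submodule.span ℝ (Set.range v) = ⊤ := by
    set S := Submodule.span ℝ (Set.range v) with hS
    have hVS : vectorSpan ℝ (Set.range v) ≤ S := by
      rw [vectorSpan_def, Submodule.span_le]
      rintro z ⟨x, hx, y, hy, rfl⟩
      have : x - y ∈ S := Submodule.sub_mem _ (Submodule.subset_span hx) (Submodule.subset_span hy)
      simpa using this
    have hpS : p ∈ S := affineSpan_subset_span hpH
    have hpV : p ∉ vectorSpan ℝ (Set.range v) := by
      intro hmem
      have hdir : H.direction = vectorSpan ℝ (Set.range v) := direction_affineSpan ℝ _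
      rw [← hdir] at hmem
      have := (Submodule.mem_orthogonal _ p).mp hpO p hmem
      exact hp0 (inner_self_eq_zero.mp this)
    have hlt : vectorSpan ℝ (Set.range v) < S := lt_of_le_of_ne hVS (by
      intro heq; exact hpV (heq ▸ hpS))
    have hfV : Module.finrank ℝ (vectorSpan ℝ (Set.range v)) = d - 1 := by
      apply hv.finrank_vectorSpan
      simp only [Fintype.card_fin]
      omega
    have hfS : d - 1 < Module.finrank ℝ S := by
      rw [← hfV]
      exact Submodule.finrank_lt_finrank_of_lt hlt
    apply Submodule.eq_top_of_finrank_eq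
    have hle : Module.finrank ℝ S ≤ d := by
      have := Submodule.finrank_le S
      simpa using this
    have h2 : Module.finrank ℝ (EuclideanSpace ℝ (Fin d)) = d := by simp
    omega
  -- everything in the hull is below
  have hbelow : ∀ x ∈ convexHull ℝ (insert 0 (Set.range a ∪ Set.range v)), ⟪h, x⟫ ≤ 1 := by
    intro x hx
    have hconv : Convex ℝ {y : EuclideanSpace ℝ (Fin d) | ⟪h, y⟫ ≤ 1} := by
      apply convex_halfSpace_le
      exact ⟨fun x y => inner_add_right _ _ _, fun t x => real_inner_smul_right _ _ _⟩
    have hsub : insert 0 (Set.range a ∪ Set.range v) ⊆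
        {y : EuclideanSpace ℝ (Fin d) | ⟪h, y⟫ ≤ 1} := by
      rintro y (rfl | (⟨i, rfl⟩ | ⟨j, rfl⟩))
      · simp
      · show ⟪h, a i⟫ ≤ 1
        calc ⟪h, a i⟫ ≤ ‖h‖ * ‖a i‖ := real_inner_le_norm _ _
          _ ≤ M⁻¹ * M := by
              apply mul_le_mul _ (ha i) (norm_nonneg _) (by positivity)
              rw [hnh]
              exact inv_anti₀ hM hpM
          _ = 1 := by field_simp
      · exact (hvone j).le
    exact convexHull_min hsub hconv hx
  -- a multiple of z₀ lies in conv (range v)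
  obtain ⟨t, ht0, htmem⟩ : ∃ t : ℝ, 0 ≤ t ∧ t • z₀ ∈ convexHull ℝ (Set.range v) := by
    set S := ∑ j, c j with hSdef
    have hSpos : 0 < S := by
      rcases (Finset.sum_nonneg fun j _ => hc j).lt_or_eq with hlt | heq
      · exact hlt
      · exfalso; apply hz₀
        have hcz : ∀ j ∈ Finset.univ, c j = 0 :=
          (Finset.sum_eq_zero_iff_of_nonneg fun j _ => hc j).mp heq.symm
        rw [hz₀c]
        exact Finset.sum_eq_zero fun j hj => by rw [hcz j hj, zero_smul]
    refine ⟨S⁻¹, by positivity, ?_⟩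
    rw [hz₀c, Finset.smul_sum]
    simp_rw [smul_smul]
    apply (convex_convexHull ℝ _).sum_mem
    · intro j _; exact mul_nonneg (inv_nonneg.mpr hSpos.le) (hc j)
    · rw [← Finset.mul_sum]; field_simp; exact hSdef.symm
    · intro j _; exact subset_convexHull ℝ _ (Set.mem_range_self j)
  -- conv (range v) is in the face
  have hface : convexHull ℝ (Set.range v) ⊆
      {x ∈ convexHull ℝ (insert 0 (Set.range a ∪ Set.range v)) | ⟪h, x⟫ = 1} := by
    intro x hx
    exact ⟨convexHull_mono (fun y hy => Set.mem_insert_of_mem _ (Or.inr hy)) hx,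
      key x (convexHull_subset_affineSpan _ hx)⟩
  refine ⟨h, key, ?_, hnorm, hbelow, ⟨t, ht0, htmem⟩, ?_, hface, ⟨t, ht0, hface htmem⟩⟩
  · -- uniqueness
    intro h' hh'
    have hz : ∀ j, ⟪h' - h, v j⟫ = 0 := by
      intro j
      rw [inner_sub_left, hvone j, hh' _ (hvH j)]; ring
    have hall : ∀ x ∈ Submodule.span ℝ (Set.range v), ⟪h' - h, x⟫ = 0 := by
      intro x hx
      induction hx using Submodule.span_induction with
      | mem x hx => obtain ⟨j, rfl⟩ := hx; exact hz j
      | zero => simp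
      | add x y _ _ hx hy => rw [inner_add_right, hx, hy]; ring
      | smul t x _ hx => rw [inner_smul_right, hx]; ring
    have h0 : ⟪h' - h, h' - h⟫ = 0 := hall _ (hspan ▸ Submodule.mem_top)
    exact sub_eq_zero.mp (inner_self_eq_zero.mp h0)
  · -- exposed
    intro _
    refine ⟨innerSL ℝ h, ?_⟩
    ext x
    simp only [Set.mem_setOf_eq, innerSL_apply_apply]
    constructor
    · rintro ⟨hx, hx1⟩
      exact ⟨hx, fun y hy => by rw [hx1]; exact hbelow y hy⟩
    · rintro ⟨hx, hmax⟩
      refine ⟨hx, ?_⟩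
      have hv0mem : v ⟨0, hd⟩ ∈ convexHull ℝ (insert 0 (Set.range a ∪ Set.range v)) :=
        subset_convexHull ℝ _ (Set.mem_insert_of_mem _ (Or.inr (Set.mem_range_self _)))
      have h1 := hmax _ hv0mem
      rw [hvone _] at h1
      exact le_antisymm (hbelow x hx) h1
end

section
/- Let d ≥ 2 and 0 < ℓ ≤ 1. Let e_1, …, e_d be an orthonormal basis of ℝ^d and let ā_1, …, ā_d ∈ ℝ^d be such that, with z_0 := (1/d)∑_{i=1}^d ā_i: ‖z_0‖ = 1; ⟨z_0, ā_i − z_0⟩ = 0 and ‖ā_i − z_0‖ = ℓ for all i; and ‖ā_i − ā_j‖ = ℓ·√(2d/(d−1)) for all i ≠ j (so ā_1,…,ā_d are the vertices of a regular simplex with center and unit normal z_0 and circumradius ℓ). Then the linear map T : ℝ^d → ℝ^d determined by T e_i = ā_i is invertible, and its inverse has operator norm ‖T^{-1}‖ ≤ 1/ℓ. -/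
/-!
Writing `āᵢ = z₀ + (āᵢ - z₀)` with `āᵢ - z₀ ⟂ z₀`, the polarization identity gives the Gram matrix
`⟪āᵢ, āⱼ⟫ = α δᵢⱼ + β` with `α = ℓ²d/(d-1)` and `β = 1 - ℓ²/(d-1)`. Hence for `x = ∑ cᵢ eᵢ`,
`‖T x‖² = α ∑ cᵢ² + β (∑ cᵢ)² ≥ ℓ² ‖x‖²`, because `α ≥ ℓ²` and `β ≥ 0` (as `ℓ² ≤ 1 ≤ d - 1`).
An endomorphism of a finite-dimensional space bounded below by `ℓ` is invertible, with inverse of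
norm at most `1/ℓ`.
-/

open RealInnerProductSpace

section GramMatrix

variable {F : Type*} [NormedAddCommGroup F] [InnerProductSpace ℝ F] {ι : Type*} [DecidableEq ι]

theorem norm_sq_sum_smul_of_inner_eq_ite_add [Fintype ι] {v : ι → F} {α β : ℝ}
    (hv : ∀ i j, ⟪v i, v j⟫ = (if i = j then α else 0) + β) (c : ι → ℝ) :
    ‖∑ i, c i • v i‖ ^ 2 = α * ∑ i, c i ^ 2 + β * (∑ i, c i) ^ 2 := by
  rw [← real_inner_self_eq_norm_sq]
  simp only [sum_inner, inner_sum, real_inner_smul_left, real_inner_smul_right, hv, mul_add,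
    Finset.sum_add_distrib, mul_ite, mul_zero, Finset.sum_ite_eq', Finset.mem_univ, if_true]
  rw [sq, Finset.sum_mul_sum, Finset.mul_sum, Finset.mul_sum]
  congr 1
  · exact Finset.sum_congr rfl fun i _ => by ring
  · refine Finset.sum_congr rfl fun i _ => ?_
    rw [Finset.mul_sum]
    exact Finset.sum_congr rfl fun j _ => by ring

theorem OrthonormalBasis.norm_sq_apply_of_inner_apply_eq_ite_add [Fintype ι] {E : Type*}
    [NormedAddCommGroup E] [InnerProductSpace ℝ E] (e : OrthonormalBasis ι ℝ E)
    (T : E →L[ℝ] F) {α β : ℝ} (hT : ∀ i j, ⟪T (e i), T (e j)⟫ = (if i = j then α else 0) + β)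
    (x : E) : ‖T x‖ ^ 2 = α * ‖x‖ ^ 2 + β * (∑ i, e.repr x i) ^ 2 := by
  have he : ∀ i j, ⟪e i, e j⟫ = (if i = j then 1 else 0) + 0 := fun i j => by
    rw [add_zero, orthonormal_iff_ite.mp e.orthonormal]
  have hx := norm_sq_sum_smul_of_inner_eq_ite_add he (e.repr x)
  have hTx := norm_sq_sum_smul_of_inner_eq_ite_add hT (e.repr x)
  simp only [← map_smul, ← map_sum, e.sum_repr] at hx hTx
  rw [hTx, hx]
  ring

theorem inner_sub_center_of_regular_simplex {a : ι → F} {z : F} {ℓ d : ℝ} (hd : 1 < d)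
    (hrad : ∀ i, ‖a i - z‖ = ℓ)
    (hpair : ∀ i j, i ≠ j → ‖a i - a j‖ = ℓ * Real.sqrt (2 * d / (d - 1))) (i j : ι) :
    ⟪a i - z, a j - z⟫ = (if i = j then ℓ ^ 2 * d / (d - 1) else 0) - ℓ ^ 2 / (d - 1) := by
  have hd' : d - 1 ≠ 0 := by linarith
  split_ifs with hij
  · rw [hij, real_inner_self_eq_norm_sq, hrad]
    field_simp
  · rw [real_inner_eq_norm_mul_self_add_norm_mul_self_sub_norm_sub_mul_self_div_two, hrad, hrad,
      sub_sub_sub_cancel_right, hpair i j hij, mul_mul_mul_comm,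
      Real.mul_self_sqrt (div_nonneg (by linarith) (by linarith))]
    field_simp
    ring

theorem inner_of_regular_simplex {a : ι → F} {z : F} {ℓ d : ℝ} (hd : 1 < d) (hz : ‖z‖ = 1)
    (horth : ∀ i, ⟪z, a i - z⟫ = 0) (hrad : ∀ i, ‖a i - z‖ = ℓ)
    (hpair : ∀ i j, i ≠ j → ‖a i - a j‖ = ℓ * Real.sqrt (2 * d / (d - 1))) (i j : ι) :
    ⟪a i, a j⟫ = (if i = j then ℓ ^ 2 * d / (d - 1) else 0) + (1 - ℓ ^ 2 / (d - 1)) := by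
  have hsplit : ∀ k, a k = z + (a k - z) := fun k => (add_sub_cancel z (a k)).symm
  rw [hsplit i, hsplit j, inner_add_left, inner_add_right, inner_add_right,
    real_inner_self_eq_norm_sq, hz, horth, real_inner_comm, horth,
    inner_sub_center_of_regular_simplex hd hrad hpair]
  ring

end GramMatrix

theorem ContinuousLinearMap.exists_inverse_norm_le_of_le_norm_apply {𝕜 E : Type*}
    [NontriviallyNormedField 𝕜] [CompleteSpace 𝕜] [NormedAddCommGroup E] [NormedSpace 𝕜 E]
    [FiniteDimensional 𝕜 E] (T : E →L[𝕜] E) {c : ℝ} (hc : 0 < c) (hT : ∀ x, c * ‖x‖ ≤ ‖T x‖) :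
    ∃ S : E →L[𝕜] E, T.comp S = ContinuousLinearMap.id 𝕜 E ∧
      S.comp T = ContinuousLinearMap.id 𝕜 E ∧ ‖S‖ ≤ 1 / c := by
  have hT' : ∀ x, ‖x‖ ≤ 1 / c * ‖T x‖ := fun x => by
    rw [one_div_mul_eq_div, le_div_iff₀' hc]
    exact hT x
  have hinj : Function.Injective (T : E →ₗ[𝕜] E) :=
    (T.antilipschitz_of_bound (K := ⟨1 / c, by positivity⟩) hT').injective
  let U := (LinearEquiv.ofInjectiveEndo _ hinj).toContinuousLinearEquiv
  have hU : (U : E →L[𝕜] E) = T := rfl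
  refine ⟨U.symm, hU ▸ U.coe_comp_coe_symm, hU ▸ U.coe_symm_comp_coe,
    ContinuousLinearMap.opNorm_le_bound _ (by positivity) fun y => ?_⟩
  simpa [← hU] using hT' (U.symm y)

theorem simplex_map_inverse_norm_general (d : ℕ) (hd : 2 ≤ d)
    (ℓ : ℝ) (hℓ0 : 0 < ℓ) (hℓ1 : ℓ ≤ 1)
    (e : OrthonormalBasis (Fin d) ℝ (EuclideanSpace ℝ (Fin d)))
    (abar : Fin d → EuclideanSpace ℝ (Fin d))
    (z₀ : EuclideanSpace ℝ (Fin d))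
    (hz₀n : ‖z₀‖ = 1)
    (horth : ∀ i, ⟪z₀, abar i - z₀⟫ = 0)
    (hrad : ∀ i, ‖abar i - z₀‖ = ℓ)
    (hpair : ∀ i j, i ≠ j → ‖abar i - abar j‖ = ℓ * Real.sqrt (2 * d / (d - 1)))
    (T : EuclideanSpace ℝ (Fin d) →L[ℝ] EuclideanSpace ℝ (Fin d))
    (hT : ∀ i, T (e i) = abar i) :
    ∃ S : EuclideanSpace ℝ (Fin d) →L[ℝ] EuclideanSpace ℝ (Fin d),
      T.comp S = ContinuousLinearMap.id ℝ (EuclideanSpace ℝ (Fin d)) ∧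
      S.comp T = ContinuousLinearMap.id ℝ (EuclideanSpace ℝ (Fin d)) ∧
      ‖S‖ ≤ 1 / ℓ := by
  have hd1 : (1 : ℝ) ≤ d - 1 := by
    have : (2 : ℝ) ≤ d := by exact_mod_cast hd
    linarith
  have hgram : ∀ i j, ⟪T (e i), T (e j)⟫
      = (if i = j then ℓ ^ 2 * d / (d - 1) else 0) + (1 - ℓ ^ 2 / (d - 1)) := by
    simpa only [hT] using inner_of_regular_simplex (by linarith) hz₀n horth hrad hpair
  have hα : ℓ ^ 2 ≤ ℓ ^ 2 * d / (d - 1) := by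
    rw [le_div_iff₀ (by linarith)]
    nlinarith
  have hβ : 0 ≤ 1 - ℓ ^ 2 / (d - 1) := by
    rw [sub_nonneg, div_le_one (by linarith)]
    nlinarith
  refine T.exists_inverse_norm_le_of_le_norm_apply hℓ0 fun x => le_of_sq_le_sq ?_ (norm_nonneg _)
  rw [e.norm_sq_apply_of_inner_apply_eq_ite_add T hgram x, mul_pow]
  exact le_add_of_le_of_nonneg (by gcongr) (mul_nonneg hβ (sq_nonneg _))

/-- Let `ā 1, …, ā d` be the vertices of a regular simplex in `ℝ^d` with center and unit
normal `z₀ = (1/d) ∑ ā i` and circumradius `ℓ ≤ 1`, and let `T` be the linear map sending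
an orthonormal basis `e` to the `ā i`. Then `T` is invertible and `‖T⁻¹‖ ≤ 1/ℓ`. -/
theorem simplex_map_inverse_norm (d : ℕ) (hd : 2 ≤ d)
    (ℓ : ℝ) (hℓ0 : 0 < ℓ) (hℓ1 : ℓ ≤ 1)
    (e : OrthonormalBasis (Fin d) ℝ (EuclideanSpace ℝ (Fin d)))
    (abar : Fin d → EuclideanSpace ℝ (Fin d))
    (z₀ : EuclideanSpace ℝ (Fin d)) (hz₀ : z₀ = (d : ℝ)⁻¹ • ∑ i, abar i)
    (hz₀n : ‖z₀‖ = 1)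
    (horth : ∀ i, ⟪z₀, abar i - z₀⟫ = 0)
    (hrad : ∀ i, ‖abar i - z₀‖ = ℓ)
    (hpair : ∀ i j, i ≠ j → ‖abar i - abar j‖ = ℓ * Real.sqrt (2 * d / (d - 1)))
    (T : EuclideanSpace ℝ (Fin d) →L[ℝ] EuclideanSpace ℝ (Fin d))
    (hT : ∀ i, T (e i) = abar i) :
    ∃ S : EuclideanSpace ℝ (Fin d) →L[ℝ] EuclideanSpace ℝ (Fin d),
      T.comp S = ContinuousLinearMap.id ℝ (EuclideanSpace ℝ (Fin d)) ∧
      S.comp T = ContinuousLinearMap.id ℝ (EuclideanSpace ℝ (Fin d)) ∧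
      ‖S‖ ≤ 1 / ℓ :=
  simplex_map_inverse_norm_general d hd ℓ hℓ0 hℓ1 e abar z₀ hz₀n horth hrad hpair T hT
end

section
/- Let d ≥ 1, let e_1, …, e_d be an orthonormal basis of ℝ^d, and let T, S : ℝ^d → ℝ^d be invertible linear maps with ‖S^{-1} − T^{-1}‖ ≤ 1/(2d) in operator norm. Set z_0 := (1/d)∑_{i=1}^d T e_i and assume ‖z_0‖ = 1. Then for every i the coefficient c_i := ⟨S^{-1} z_0, e_i⟩ satisfies c_i ≥ 1/(2d) > 0, and z_0 = ∑_{i=1}^d c_i · S e_i; in particular z_0 lies in the cone of nonnegative linear combinations of S e_1, …, S e_d. -/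
open RealInnerProductSpace

/-- Let `e` be an orthonormal basis of `ℝ^d`, let `T, S` be invertible linear maps with
`‖S⁻¹ − T⁻¹‖ ≤ 1/(2d)`, and set `z₀ = (1/d) ∑ T (e i)` with `‖z₀‖ = 1`. Then each
coefficient `c i = ⟪S⁻¹ z₀, e i⟫` satisfies `c i ≥ 1/(2d) > 0` and
`z₀ = ∑ c i • S (e i)`; in particular `z₀` lies in the cone of nonnegative combinations of
the `S (e i)`. -/
theorem center_in_cone_of_perturbed (d : ℕ) (hd : 1 ≤ d)
    (e : OrthonormalBasis (Fin d) ℝ (EuclideanSpace ℝ (Fin d)))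
    (T S Tinv Sinv : EuclideanSpace ℝ (Fin d) →L[ℝ] EuclideanSpace ℝ (Fin d))
    (hT1 : T.comp Tinv = ContinuousLinearMap.id ℝ (EuclideanSpace ℝ (Fin d)))
    (hT2 : Tinv.comp T = ContinuousLinearMap.id ℝ (EuclideanSpace ℝ (Fin d)))
    (hS1 : S.comp Sinv = ContinuousLinearMap.id ℝ (EuclideanSpace ℝ (Fin d)))
    (hS2 : Sinv.comp S = ContinuousLinearMap.id ℝ (EuclideanSpace ℝ (Fin d)))
    (hnorm : ‖Sinv - Tinv‖ ≤ 1 / (2 * d))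
    (z₀ : EuclideanSpace ℝ (Fin d)) (hz₀ : z₀ = (d : ℝ)⁻¹ • ∑ i, T (e i))
    (hz₀n : ‖z₀‖ = 1) :
    (∀ i, 1 / (2 * (d : ℝ)) ≤ ⟪Sinv z₀, e i⟫) ∧ (0:ℝ) < 1 / (2 * (d : ℝ)) ∧
      z₀ = ∑ i, ⟪Sinv z₀, e i⟫ • S (e i) ∧
      ∃ lam : Fin d → ℝ, (∀ i, 0 ≤ lam i) ∧ z₀ = ∑ i, lam i • S (e i) := by
  have hdpos : (0:ℝ) < d := by exact_mod_cast hd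
  have hTid : ∀ x, Tinv (T x) = x := fun x =>
    congrFun (congrArg (fun f => f.toFun) hT2) x
  have hSid : ∀ x, S (Sinv x) = x := fun x =>
    congrFun (congrArg (fun f => f.toFun) hS1) x
  have hTinvz : Tinv z₀ = (d : ℝ)⁻¹ • ∑ i, e i := by
    rw [hz₀, map_smul, map_sum]
    simp [hTid]
  have hinnerT : ∀ i, ⟪Tinv z₀, e i⟫ = (d : ℝ)⁻¹ := by
    intro i
    rw [hTinvz, real_inner_smul_left, sum_inner]
    have : ∑ j, ⟪e j, e i⟫ = 1 := by
      rw [Finset.sum_eq_single i]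
      · rw [real_inner_self_eq_norm_mul_norm, e.orthonormal.1 i]; norm_num
      · intro j _ hj; exact e.orthonormal.2 hj
      · simp
    rw [this, mul_one]
  have key : ∀ i, 1 / (2 * (d : ℝ)) ≤ ⟪Sinv z₀, e i⟫ := by
    intro i
    have hdiff : |⟪(Sinv - Tinv) z₀, e i⟫| ≤ 1 / (2 * d) := by
      calc |⟪(Sinv - Tinv) z₀, e i⟫| ≤ ‖(Sinv - Tinv) z₀‖ * ‖e i‖ :=
            abs_real_inner_le_norm _ _
        _ ≤ ‖Sinv - Tinv‖ * ‖z₀‖ * ‖e i‖ := by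
            gcongr; exact (Sinv - Tinv).le_opNorm z₀
        _ ≤ 1 / (2 * d) := by rw [hz₀n, e.orthonormal.1 i]; linarith
    have h1 : ⟪Sinv z₀, e i⟫ = ⟪Tinv z₀, e i⟫ + ⟪(Sinv - Tinv) z₀, e i⟫ := by
      rw [ContinuousLinearMap.sub_apply, inner_sub_left]; ring
    have h2 : -(1 / (2 * (d:ℝ))) ≤ ⟪(Sinv - Tinv) z₀, e i⟫ := neg_le_of_abs_le hdiff
    rw [h1, hinnerT]
    have : (d:ℝ)⁻¹ - 1 / (2 * d) = 1 / (2 * d) := by field_simp; ring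
    linarith
  refine ⟨key, by positivity, ?_, ?_⟩
  · conv_lhs => rw [← hSid z₀]
    conv_lhs => rw [← (e.sum_repr (Sinv z₀))]
    rw [map_sum]
    congr 1; funext i
    rw [map_smul]
    congr 1
    rw [e.repr_apply_apply, real_inner_comm]
  · exact ⟨fun i => ⟪Sinv z₀, e i⟫, fun i => le_trans (by positivity) (key i), by
      conv_lhs => rw [← hSid z₀]
      conv_lhs => rw [← (e.sum_repr (Sinv z₀))]
      rw [map_sum]
      congr 1; funext i
      rw [map_smul]
      congr 1
      rw [e.repr_apply_apply, real_inner_comm]⟩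
end
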